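/- arXiv:2507.03661 — 5 statements merged into one kernel-verified Lean document; each statement's English description precedes it below -/
import Mathlib

section
/- Let Γ¹ and Γ² be lower Eulerian posets of the same rank with common boundary Γ_B = Γ¹ ∩ Γ² (so Γ_B is a lower set of each with rk Γ_B = rk Γ^i − 1). Then the agglutination Γ¹ ♯_{Γ_B} Γ² is lower Eulerian and its h-polynomial satisfies h(Γ¹ ♯_{Γ_B} Γ²; t) = h(Γ¹; t) + h(Γ²; t) + (t − 1) h(Γ_B; t). -/
attribute [local instance] Classical.propDecidable

noncomputable section

/-- The finite subposet `S` (with induced order) is ranked with rank function `ρ`: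
ranks strictly increase, and covering relations (within `S`) increase rank by one. -/
def IsRankedOn {α : Type*} [PartialOrder α] (S : Finset α) (ρ : α → ℕ) : Prop :=
  (∀ x ∈ S, ∀ y ∈ S, x < y → ρ x < ρ y) ∧
  (∀ x ∈ S, ∀ y ∈ S, x < y → (∀ z ∈ S, ¬ (x < z ∧ z < y)) → ρ y = ρ x + 1)

/-- The finite subposet `S` is locally Eulerian: it is ranked and every nontrivial
interval `[x,y]` in `S` has equally many elements of even and of odd rank. -/
def IsLocallyEulerianOn {α : Type*} [PartialOrder α] (S : Finset α) (ρ : α → ℕ) : Prop :=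
  IsRankedOn S ρ ∧
  ∀ x ∈ S, ∀ y ∈ S, x < y →
    (S.filter (fun z => x ≤ z ∧ z ≤ y ∧ Even (ρ z))).card =
    (S.filter (fun z => x ≤ z ∧ z ≤ y ∧ ¬ Even (ρ z))).card

/-- Lower Eulerian: locally Eulerian with a minimum. -/
def IsLowerEulerianOn {α : Type*} [PartialOrder α] (S : Finset α) (ρ : α → ℕ) : Prop :=
  IsLocallyEulerianOn S ρ ∧ ∃ b ∈ S, ∀ x ∈ S, b ≤ x

/-- Eulerian: lower Eulerian with a maximum. -/
def IsEulerianOn {α : Type*} [PartialOrder α] (S : Finset α) (ρ : α → ℕ) : Prop :=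
  IsLowerEulerianOn S ρ ∧ ∃ t ∈ S, ∀ x ∈ S, x ≤ t

/-- `G` is a system of `g`-polynomials for the intervals of the finite poset `S` with rank
function `ρ`: `G x y = g([x,y]; t)`.  Defining property: `G x x = 1` and, for `x < y` of
rank difference `r`, `deg (G x y) < r/2` and
`t^r · (G x y)(1/t) = Σ_{x ≤ z ≤ y} (G x z) · (t−1)^{r − (ρ z − ρ x)}`
(the left-hand side being `Polynomial.reflect r (G x y)`). -/
def IsGSystemOn {α : Type*} [PartialOrder α] (S : Finset α) (ρ : α → ℕ)
    (G : α → α → Polynomial ℤ) : Prop :=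
  (∀ x ∈ S, G x x = 1) ∧
  ∀ x ∈ S, ∀ y ∈ S, x < y →
    2 * (G x y).natDegree < ρ y - ρ x ∧
    Polynomial.reflect (ρ y - ρ x) (G x y) =
      ∑ z ∈ S.filter (fun z => x ≤ z ∧ z ≤ y), G x z * (Polynomial.X - 1) ^ (ρ y - ρ z)

/-- `G` is a system of `g`-polynomials of the *dual* intervals of `S`: `G x y = g([x,y]^*; t)`. -/
def IsDualGSystemOn {α : Type*} [PartialOrder α] (S : Finset α) (ρ : α → ℕ)
    (G : α → α → Polynomial ℤ) : Prop :=
  (∀ x ∈ S, G x x = 1) ∧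
  ∀ x ∈ S, ∀ y ∈ S, x < y →
    2 * (G x y).natDegree < ρ y - ρ x ∧
    Polynomial.reflect (ρ y - ρ x) (G x y) =
      ∑ z ∈ S.filter (fun z => x ≤ z ∧ z ≤ y), G z y * (Polynomial.X - 1) ^ (ρ z - ρ x)

/-- The `h`-polynomial of a finite lower Eulerian poset `S` with minimum `b`, rank function
`ρ` and `g`-polynomial system `G`: it is defined by
`t^n · h(S;1/t) = Σ_{x ∈ S} g([b,x];t) (t−1)^{n−ρ(b,x)}` where `n = rk S`; equivalently
`h(S;t) = reflect n (Σ_{x ∈ S} G b x · (t−1)^{sup ρ − ρ x})`, with `n = S.sup ρ − ρ b`. -/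
def hPoly {α : Type*} [PartialOrder α] (ρ : α → ℕ) (G : α → α → Polynomial ℤ)
    (S : Finset α) (b : α) : Polynomial ℤ :=
  Polynomial.reflect (S.sup ρ - ρ b)
    (∑ x ∈ S, G b x * (Polynomial.X - 1) ^ (S.sup ρ - ρ x))

/-- The relative local `h`-polynomial `ℓ_B(Γ, x, y; t)` of an order-preserving map
`σ : Γ → B` (with `Γ` realized as the finite poset `S` in `α`, and `B` as the finite poset
`T` in `β`), for `y ∈ Γ` and `x ∈ B` with `σ y ≤ x`:
`ℓ_B(Γ, x, y; t) = Σ_{σ(y) ≤ x' ≤ x} h((Γ_{≥y})_{x'}; t) · (−1)^{ρ(x',x)} · g([x',x]^*; t)`,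
where `(Γ_{≥y})_{x'} = {y' ∈ Γ : y ≤ y', σ y' ≤ x'}`, `ρA, G` give the `h`-polynomials on
the source side, and `G'` is a system of `g`-polynomials of dual intervals of `T`. -/
def relLocH {α β : Type*} [PartialOrder α] [PartialOrder β]
    (ρA : α → ℕ) (G : α → α → Polynomial ℤ) (σ : α → β) (S : Finset α) (y : α)
    (ρB : β → ℕ) (G' : β → β → Polynomial ℤ) (T : Finset β) (x : β) : Polynomial ℤ :=
  ∑ x' ∈ T.filter (fun x' => σ y ≤ x' ∧ x' ≤ x),
    (-1 : Polynomial ℤ) ^ (ρB x - ρB x') *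
      hPoly ρA G (S.filter (fun y' => y ≤ y' ∧ σ y' ≤ x')) y * G' x' x

/-- `σ` is a strong formal subdivision from the finite poset `S ⊆ α` (rank function `ρA`)
to the finite poset `T ⊆ β` (rank function `ρB`): it is order preserving, rank increasing,
strongly surjective, and satisfies the Euler-characteristic condition
`Σ_{y' ≥ y, σ y' = x} (−1)^{ρB x − ρA y'} = 1` whenever `y ∈ S`, `x ∈ T`, `σ y ≤ x`. -/
def IsSFSOn {α β : Type*} [PartialOrder α] [PartialOrder β]
    (S : Finset α) (ρA : α → ℕ) (σ : α → β) (T : Finset β) (ρB : β → ℕ) : Prop :=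
  (∀ y ∈ S, σ y ∈ T) ∧
  (∀ y ∈ S, ∀ y' ∈ S, y ≤ y' → σ y ≤ σ y') ∧
  (∀ y ∈ S, ρA y ≤ ρB (σ y)) ∧
  (∀ x ∈ T, ∃ y ∈ S, σ y = x) ∧
  (∀ y ∈ S, ∀ x ∈ T, σ y ≤ x → ∃ y' ∈ S, y ≤ y' ∧ ρA y' = ρB x ∧ σ y' = x) ∧
  (∀ y ∈ S, ∀ x ∈ T, σ y ≤ x →
    ∑ y' ∈ S.filter (fun y' => y ≤ y' ∧ σ y' = x), (-1 : ℤ) ^ (ρB x - ρA y') = 1)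

private lemma reflect_sub' (N : ℕ) (f g : Polynomial ℤ) :
    Polynomial.reflect N (f - g) = Polynomial.reflect N f - Polynomial.reflect N g := by
  ext i
  simp [Polynomial.coeff_reflect]

private lemma reflect_one_X_sub_one :
    Polynomial.reflect 1 ((Polynomial.X : Polynomial ℤ) - 1) = 1 - Polynomial.X := by
  have h := reflect_sub' 1 (Polynomial.X : Polynomial ℤ) 1
  have h1 : Polynomial.reflect 1 (Polynomial.X : Polynomial ℤ) = 1 := by
    simpa using Polynomial.reflect_monomial 1 1 (R := ℤ)
  have h2 : Polynomial.reflect 1 (1 : Polynomial ℤ) = Polynomial.X := by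
    simpa using Polynomial.reflect_monomial 1 0 (R := ℤ)
  rw [h, h1, h2]

/-- let `Γ¹, Γ²` be finite lower Eulerian posets of the same rank with common
boundary `Γ_B = Γ¹ ∩ Γ²` (a lower set of each, of rank one less).  The agglutination
`Γ¹ ♯_{Γ_B} Γ²` is realized as the union `Γ¹ ∪ Γ²` inside an ambient partial order in
which no element of `Γ¹ ∖ Γ_B` is comparable to any element of `Γ² ∖ Γ_B`.  Then the
agglutination is lower Eulerian and
`h(Γ¹ ♯_{Γ_B} Γ²; t) = h(Γ¹; t) + h(Γ²; t) + (t − 1) h(Γ_B; t)`. -/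
theorem hPoly_agglutination {α : Type*} [PartialOrder α] (ρ : α → ℕ)
    (Γ₁ Γ₂ : Finset α)
    (hlow₁ : ∀ x ∈ Γ₁, ∀ y ∈ Γ₁ ∩ Γ₂, x ≤ y → x ∈ Γ₁ ∩ Γ₂)
    (hlow₂ : ∀ x ∈ Γ₂, ∀ y ∈ Γ₁ ∩ Γ₂, x ≤ y → x ∈ Γ₁ ∩ Γ₂)
    (hincomp : ∀ x ∈ Γ₁ \ (Γ₁ ∩ Γ₂), ∀ y ∈ Γ₂ \ (Γ₁ ∩ Γ₂), ¬ x ≤ y ∧ ¬ y ≤ x)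
    (hLE₁ : IsLowerEulerianOn Γ₁ ρ) (hLE₂ : IsLowerEulerianOn Γ₂ ρ)
    (hrk : Γ₁.sup ρ = Γ₂.sup ρ)
    (hrkB : (Γ₁ ∩ Γ₂).sup ρ + 1 = Γ₁.sup ρ)
    (b : α) (hbB : b ∈ Γ₁ ∩ Γ₂) (hb : ∀ x ∈ Γ₁ ∪ Γ₂, b ≤ x)
    (G : α → α → Polynomial ℤ) (hG : IsGSystemOn (Γ₁ ∪ Γ₂) ρ G) :
    IsLowerEulerianOn (Γ₁ ∪ Γ₂) ρ ∧
    hPoly ρ G (Γ₁ ∪ Γ₂) b =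
      hPoly ρ G Γ₁ b + hPoly ρ G Γ₂ b + (Polynomial.X - 1) * hPoly ρ G (Γ₁ ∩ Γ₂) b := by
  classical
  obtain ⟨⟨⟨hmono₁, hcov₁⟩, heul₁⟩, -⟩ := hLE₁
  obtain ⟨⟨⟨hmono₂, hcov₂⟩, heul₂⟩, -⟩ := hLE₂
  have hbΓ₁ : b ∈ Γ₁ := (Finset.mem_inter.1 hbB).1
  -- comparable elements lie in a common part
  have hsame : ∀ x ∈ Γ₁ ∪ Γ₂, ∀ y ∈ Γ₁ ∪ Γ₂, x ≤ y →
      (x ∈ Γ₁ ∧ y ∈ Γ₁) ∨ (x ∈ Γ₂ ∧ y ∈ Γ₂) := by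
    intro x hx y hy hxy
    rw [Finset.mem_union] at hx hy
    by_cases hx1 : x ∈ Γ₁ <;> by_cases hy1 : y ∈ Γ₁
    · exact Or.inl ⟨hx1, hy1⟩
    · have hy2 : y ∈ Γ₂ := hy.resolve_left hy1
      by_cases hx2 : x ∈ Γ₂
      · exact Or.inr ⟨hx2, hy2⟩
      · exact absurd hxy (hincomp x (by simp [Finset.mem_sdiff, Finset.mem_inter, hx1, hx2])
          y (by simp [Finset.mem_sdiff, Finset.mem_inter, hy2, hy1])).1
    · have hx2 : x ∈ Γ₂ := hx.resolve_left hx1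
      by_cases hy2 : y ∈ Γ₂
      · exact Or.inr ⟨hx2, hy2⟩
      · exact absurd hxy (hincomp y (by simp [Finset.mem_sdiff, Finset.mem_inter, hy1, hy2])
          x (by simp [Finset.mem_sdiff, Finset.mem_inter, hx2, hx1])).2
    · exact Or.inr ⟨hx.resolve_left hx1, hy.resolve_left hy1⟩
  -- intervals with endpoints in Γ₁ stay in Γ₁ (and similarly for Γ₂)
  have hint₁ : ∀ x ∈ Γ₁, ∀ y ∈ Γ₁, ∀ z ∈ Γ₁ ∪ Γ₂, x ≤ z → z ≤ y → z ∈ Γ₁ := by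
    intro x hx y hy z hz hxz hzy
    by_cases hz1 : z ∈ Γ₁
    · exact hz1
    have hz2 : z ∈ Γ₂ := (Finset.mem_union.1 hz).resolve_left hz1
    by_cases hy2 : y ∈ Γ₂
    · exact (Finset.mem_inter.1 (hlow₂ z hz2 y (Finset.mem_inter.2 ⟨hy, hy2⟩) hzy)).1
    · exact absurd hzy (hincomp y (by simp [Finset.mem_sdiff, Finset.mem_inter, hy, hy2])
        z (by simp [Finset.mem_sdiff, Finset.mem_inter, hz2, hz1])).2
  have hint₂ : ∀ x ∈ Γ₂, ∀ y ∈ Γ₂, ∀ z ∈ Γ₁ ∪ Γ₂, x ≤ z → z ≤ y → z ∈ Γ₂ := by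
    intro x hx y hy z hz hxz hzy
    by_cases hz2 : z ∈ Γ₂
    · exact hz2
    have hz1 : z ∈ Γ₁ := (Finset.mem_union.1 hz).resolve_right hz2
    by_cases hy1 : y ∈ Γ₁
    · exact (Finset.mem_inter.1 (hlow₁ z hz1 y (Finset.mem_inter.2 ⟨hy1, hy⟩) hzy)).2
    · exact absurd hzy (hincomp z (by simp [Finset.mem_sdiff, Finset.mem_inter, hz1, hz2])
        y (by simp [Finset.mem_sdiff, Finset.mem_inter, hy, hy1])).1
  have hfilter₁ : ∀ x ∈ Γ₁, ∀ y ∈ Γ₁, ∀ (p : α → Prop) (inst : DecidablePred p),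
      (∀ z, p z → x ≤ z ∧ z ≤ y) →
      @Finset.filter α p inst (Γ₁ ∪ Γ₂) = @Finset.filter α p inst Γ₁ := by
    intro x hx y hy p inst hp
    ext z
    simp only [Finset.mem_filter, Finset.mem_union]
    constructor
    · rintro ⟨hz, h⟩
      exact ⟨hint₁ x hx y hy z (Finset.mem_union.2 hz) (hp z h).1 (hp z h).2, h⟩
    · rintro ⟨hz, h⟩
      exact ⟨Or.inl hz, h⟩
  have hfilter₂ : ∀ x ∈ Γ₂, ∀ y ∈ Γ₂, ∀ (p : α → Prop) (inst : DecidablePred p),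
      (∀ z, p z → x ≤ z ∧ z ≤ y) →
      @Finset.filter α p inst (Γ₁ ∪ Γ₂) = @Finset.filter α p inst Γ₂ := by
    intro x hx y hy p inst hp
    ext z
    simp only [Finset.mem_filter, Finset.mem_union]
    constructor
    · rintro ⟨hz, h⟩
      exact ⟨hint₂ x hx y hy z (Finset.mem_union.2 hz) (hp z h).1 (hp z h).2, h⟩
    · rintro ⟨hz, h⟩
      exact ⟨Or.inr hz, h⟩
  constructor
  · refine ⟨⟨⟨?_, ?_⟩, ?_⟩, b, Finset.mem_union_left _ hbΓ₁, hb⟩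
    · intro x hx y hy hxy
      rcases hsame x hx y hy hxy.le with ⟨h1, h2⟩ | ⟨h1, h2⟩
      · exact hmono₁ x h1 y h2 hxy
      · exact hmono₂ x h1 y h2 hxy
    · intro x hx y hy hxy hcov
      rcases hsame x hx y hy hxy.le with ⟨h1, h2⟩ | ⟨h1, h2⟩
      · exact hcov₁ x h1 y h2 hxy fun z hz => hcov z (Finset.mem_union_left _ hz)
      · exact hcov₂ x h1 y h2 hxy fun z hz => hcov z (Finset.mem_union_right _ hz)
    · intro x hx y hy hxy
      rcases hsame x hx y hy hxy.le with ⟨h1, h2⟩ | ⟨h1, h2⟩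
      · rw [hfilter₁ x h1 y h2 _ _ (fun z hz => ⟨hz.1, hz.2.1⟩),
            hfilter₁ x h1 y h2 _ _ (fun z hz => ⟨hz.1, hz.2.1⟩)]
        exact heul₁ x h1 y h2 hxy
      · rw [hfilter₂ x h1 y h2 _ _ (fun z hz => ⟨hz.1, hz.2.1⟩),
            hfilter₂ x h1 y h2 _ _ (fun z hz => ⟨hz.1, hz.2.1⟩)]
        exact heul₂ x h1 y h2 hxy
  -- the h-polynomial identity
  set n := Γ₁.sup ρ with hn
  have hsupU : (Γ₁ ∪ Γ₂).sup ρ = n := by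
    rw [Finset.sup_union, ← hrk]
    exact sup_idem n
  have hBsup : (Γ₁ ∩ Γ₂).sup ρ = n - 1 := by omega
  have hρb : ρ b ≤ n - 1 := hBsup ▸ Finset.le_sup hbB
  have hn1 : 1 ≤ n := by omega
  set N := n - ρ b with hN
  have hN1 : 1 ≤ N := by omega
  set PB : Polynomial ℤ :=
    ∑ x ∈ Γ₁ ∩ Γ₂, G b x * (Polynomial.X - 1) ^ (n - 1 - ρ x) with hPB
  have hXd : (Polynomial.X - 1 : Polynomial ℤ).natDegree = 1 := by
    simpa using Polynomial.natDegree_X_sub_C (1 : ℤ)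
  have hdegPB : PB.natDegree ≤ N - 1 := by
    apply Polynomial.natDegree_sum_le_of_forall_le
    intro x hx
    have hxn : ρ x ≤ n - 1 := hBsup ▸ Finset.le_sup hx
    have hxΓ₁ : x ∈ Γ₁ := (Finset.mem_inter.1 hx).1
    have hxU : x ∈ Γ₁ ∪ Γ₂ := Finset.mem_union_left _ hxΓ₁
    have hpow : ((Polynomial.X - 1 : Polynomial ℤ) ^ (n - 1 - ρ x)).natDegree
        = n - 1 - ρ x := by
      rw [Polynomial.natDegree_pow, hXd, mul_one]
    rcases eq_or_lt_of_le (hb x hxU) with h | h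
    · subst h
      rw [hG.1 b (Finset.mem_union_left _ hbΓ₁), one_mul, hpow]
      omega
    · have hd := (hG.2 b (Finset.mem_union_left _ hbΓ₁) x hxU h).1
      have hm := hmono₁ b hbΓ₁ x hxΓ₁ h
      calc (G b x * (Polynomial.X - 1) ^ (n - 1 - ρ x)).natDegree
          ≤ (G b x).natDegree + ((Polynomial.X - 1 : Polynomial ℤ) ^ (n - 1 - ρ x)).natDegree :=
            Polynomial.natDegree_mul_le
        _ = (G b x).natDegree + (n - 1 - ρ x) := by rw [hpow]
        _ ≤ N - 1 := by omega
  have hsum : (∑ x ∈ Γ₁ ∪ Γ₂, G b x * (Polynomial.X - 1) ^ (n - ρ x))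
      = (∑ x ∈ Γ₁, G b x * (Polynomial.X - 1) ^ (n - ρ x))
        + (∑ x ∈ Γ₂, G b x * (Polynomial.X - 1) ^ (n - ρ x))
        - (Polynomial.X - 1) * PB := by
    have hInter : ∑ x ∈ Γ₁ ∩ Γ₂, G b x * (Polynomial.X - 1) ^ (n - ρ x)
        = (Polynomial.X - 1) * PB := by
      rw [hPB, Finset.mul_sum]
      refine Finset.sum_congr rfl fun x hx => ?_
      have hxn : ρ x ≤ n - 1 := hBsup ▸ Finset.le_sup hx
      have he : n - ρ x = (n - 1 - ρ x) + 1 := by omega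
      rw [he, pow_succ]
      ring
    have hU : Γ₁ ∪ Γ₂ = Γ₁ ∪ (Γ₂ \ Γ₁) := by
      rw [Finset.union_sdiff_self_eq_union]
    have hΓ₂ : Γ₂ = (Γ₁ ∩ Γ₂) ∪ (Γ₂ \ Γ₁) := by
      ext z
      simp only [Finset.mem_union, Finset.mem_inter, Finset.mem_sdiff]
      tauto
    have hd1 : Disjoint Γ₁ (Γ₂ \ Γ₁) := Finset.disjoint_sdiff
    have hd2 : Disjoint (Γ₁ ∩ Γ₂) (Γ₂ \ Γ₁) :=
      Finset.disjoint_left.2 fun a ha ha' =>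
        (Finset.mem_sdiff.1 ha').2 (Finset.mem_inter.1 ha).1
    rw [hU, Finset.sum_union hd1, ← hInter]
    nth_rewrite 2 [hΓ₂]
    rw [Finset.sum_union hd2]
    ring
  have hrefl : Polynomial.reflect N ((Polynomial.X - 1) * PB)
      = (1 - Polynomial.X) * Polynomial.reflect (N - 1) PB := by
    have hXd' : (Polynomial.X - 1 : Polynomial ℤ).natDegree ≤ 1 := hXd.le
    have h := Polynomial.reflect_mul (Polynomial.X - 1 : Polynomial ℤ) PB hXd' hdegPB
    have hNe : 1 + (N - 1) = N := by omega
    rw [hNe] at h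
    rw [h, reflect_one_X_sub_one]
  have hBpoly : hPoly ρ G (Γ₁ ∩ Γ₂) b = Polynomial.reflect (N - 1) PB := by
    unfold hPoly
    rw [hBsup, hPB]
    congr 1
    omega
  unfold hPoly
  rw [hsupU, ← hrk, hBsup]
  rw [hsum, reflect_sub', Polynomial.reflect_add, hrefl]
  have hBpoly' : Polynomial.reflect (n - 1 - ρ b)
      (∑ x ∈ Γ₁ ∩ Γ₂, G b x * (Polynomial.X - 1) ^ (n - 1 - ρ x))
      = Polynomial.reflect (N - 1) PB := by
    rw [hPB]
    congr 1
    omega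
  rw [hBpoly']
  ring


end
end

section
/- For any lower Eulerian poset R, h(R; t) = h(R^±; t), where R^± is the twins-poset born from R, a lower Eulerian poset of rank rk(R) + 1. -/
attribute [local instance] Classical.propDecidable

noncomputable section

open Polynomial Finset

/-!
The twins poset `R^±` is `R × {0 < 1}` with rank `ρ(r) + ε`. Its intervals are copies of
intervals of `R` and, for `φ⁻(x) < y`, twins of intervals `[x, y]` of `R`; hence `R^±` is lower
Eulerian, and the choice `g([φ⁻(x), y]) = g([x, y])` satisfies the defining recursion of
`g`-polynomials of `R^±`, because `(t - 1)^(k+1) + (t - 1)^k = t (t - 1)^k` and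
`t^(r+1) g(1/t) = t · t^r g(1/t)`. By uniqueness of `g`-polynomials these are the
`g`-polynomials of `R^±`, and the same identity shows that the sum defining `h(R^±)` is `t`
times the sum defining `h(R)`, while the rank goes up by one.
-/

namespace Polynomial

variable {R : Type*}

lemma eq_zero_of_reflect_eq_self [Semiring R] {N : ℕ} {p : R[X]} (hdeg : 2 * p.natDegree < N)
    (h : p.reflect N = p) : p = 0 := by
  by_contra hp
  have := congrArg (coeff · (N - p.natDegree)) h
  simp only [coeff_reflect, revAt_le (Nat.sub_le N _),
    Nat.sub_sub_self (by omega : p.natDegree ≤ N), coeff_natDegree,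
    coeff_eq_zero_of_natDegree_lt (by omega : p.natDegree < N - p.natDegree)] at this
  exact leadingCoeff_ne_zero.mpr hp this

lemma eq_of_reflect_sub_self_eq [Ring R] {N : ℕ} {p q : R[X]} (hp : 2 * p.natDegree < N)
    (hq : 2 * q.natDegree < N) (h : p.reflect N - p = q.reflect N - q) : p = q := by
  refine sub_eq_zero.mp (eq_zero_of_reflect_eq_self (N := N) ?_ ?_)
  · have := natDegree_sub_le p q
    omega
  · rw [reflect_sub]
    exact sub_eq_sub_iff_sub_eq_sub.mp h

lemma reflect_succ_of_natDegree_le [CommSemiring R] {N : ℕ} {p : R[X]} (hp : p.natDegree ≤ N) :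
    p.reflect (N + 1) = X * p.reflect N := by
  simpa [add_comm 1 N] using reflect_mul (1 : R[X]) p (F := 1) (by simp) hp

lemma reflect_succ_X_mul [CommSemiring R] {N : ℕ} {p : R[X]} (hp : p.natDegree ≤ N) :
    (X * p).reflect (N + 1) = p.reflect N := by
  simpa [add_comm 1 N] using reflect_mul (X : R[X]) p (F := 1) natDegree_X_le hp

end Polynomial

section Twins

variable {β : Type*}

lemma sum_product_univ_bool {M : Type*} [AddCommMonoid M] (S : Finset β) (f : β × Bool → M) :
    ∑ p ∈ S ×ˢ univ, f p = ∑ z ∈ S, f (z, false) + ∑ z ∈ S, f (z, true) := by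
  simp only [sum_product, Fintype.sum_bool, sum_add_distrib, add_comm]

lemma sum_filter_product_univ_bool {M : Type*} [AddCommMonoid M] (S : Finset β)
    (P : β × Bool → Prop) [DecidablePred P] (f : β × Bool → M) :
    ∑ p ∈ (S ×ˢ univ).filter P, f p =
      ∑ z ∈ S.filter (fun z => P (z, false)), f (z, false) +
        ∑ z ∈ S.filter (fun z => P (z, true)), f (z, true) := by
  rw [sum_filter, sum_product_univ_bool, sum_filter, sum_filter]

lemma card_filter_product_univ_bool (S : Finset β) (P : β × Bool → Prop) [DecidablePred P] :
    #((S ×ˢ univ).filter P) =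
      #(S.filter (fun z => P (z, false))) + #(S.filter (fun z => P (z, true))) := by
  simpa only [card_eq_sum_ones] using sum_filter_product_univ_bool S P (fun _ => 1)

/-- The rank function of the twins poset: `(r, false)` stands for `φ⁻(r)` and `(r, true)`
for `r`. -/
def twinsRank (ρ : β → ℕ) (p : β × Bool) : ℕ := ρ p.1 + p.2.toNat

@[simp] lemma twinsRank_mk (ρ : β → ℕ) (x : β) (ε : Bool) :
    twinsRank ρ (x, ε) = ρ x + ε.toNat := rfl

variable {ρ : β → ℕ} {S : Finset β}

lemma sup_twinsRank (hS : S.Nonempty) : (S ×ˢ univ).sup (twinsRank ρ) = S.sup ρ + 1 := by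
  rw [show twinsRank ρ = fun p => ρ p.1 + p.2.toNat from rfl, ← sup_add_sup hS univ_nonempty]
  rfl

lemma sum_mul_X_sub_one_pow_succ_add {R : Type*} [CommRing R] (T : Finset β) (F : β → R[X])
    {m : ℕ} (hm : ∀ z ∈ T, ρ z ≤ m) :
    ∑ z ∈ T, F z * (X - 1) ^ (m + 1 - ρ z) + ∑ z ∈ T, F z * (X - 1) ^ (m - ρ z) =
      X * ∑ z ∈ T, F z * (X - 1) ^ (m - ρ z) := by
  rw [← sum_add_distrib, mul_sum]
  refine sum_congr rfl fun z hz => ?_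
  rw [Nat.sub_add_comm (hm z hz), pow_succ]
  ring

end Twins

section GPolynomials

variable {α : Type*} [PartialOrder α] {S : Finset α} {ρ : α → ℕ} {G : α → α → ℤ[X]}

lemma IsRankedOn.rank_le (h : IsRankedOn S ρ) {x y : α} (hx : x ∈ S) (hy : y ∈ S)
    (hxy : x ≤ y) : ρ x ≤ ρ y := by
  rcases hxy.eq_or_lt with rfl | hlt
  exacts [le_rfl, (h.1 x hx y hy hlt).le]

lemma IsGSystemOn.natDegree_le (hG : IsGSystemOn S ρ G) {x y : α} (hx : x ∈ S) (hy : y ∈ S)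
    (hxy : x ≤ y) : 2 * (G x y).natDegree ≤ ρ y - ρ x := by
  rcases hxy.eq_or_lt with rfl | hlt
  · simp [hG.1 x hx]
  · exact (hG.2 x hx y hy hlt).1.le

lemma IsGSystemOn.reflect_eq_sum (hG : IsGSystemOn S ρ G) {x y : α} (hx : x ∈ S) (hy : y ∈ S)
    (hxy : x ≤ y) :
    (G x y).reflect (ρ y - ρ x) =
      ∑ z ∈ S.filter (fun z => x ≤ z ∧ z ≤ y), G x z * (X - 1) ^ (ρ y - ρ z) := by
  rcases hxy.eq_or_lt with rfl | hlt
  · have : S.filter (fun z => x ≤ z ∧ z ≤ x) = {x} := by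
      ext z
      simpa [← le_antisymm_iff, eq_comm] using fun h : x = z => h ▸ hx
    simp [this, hG.1 x hx]
  · exact (hG.2 x hx y hy hlt).2

theorem IsGSystemOn.unique {G' : α → α → ℤ[X]} (hρ : ∀ x ∈ S, ∀ y ∈ S, x < y → ρ x < ρ y)
    (hG : IsGSystemOn S ρ G) (hG' : IsGSystemOn S ρ G') {x y : α} (hx : x ∈ S) (hy : y ∈ S)
    (hxy : x ≤ y) : G x y = G' x y := by
  induction hn : ρ y using Nat.strong_induction_on generalizing y with
  | _ n ih =>
  rcases hxy.eq_or_lt with rfl | hlt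
  · rw [hG.1 x hx, hG'.1 x hx]
  obtain ⟨hdeg, hrec⟩ := hG.2 x hx y hy hlt
  obtain ⟨hdeg', hrec'⟩ := hG'.2 x hx y hy hlt
  have hyI : y ∈ S.filter (fun z => x ≤ z ∧ z ≤ y) := mem_filter.mpr ⟨hy, hxy, le_rfl⟩
  rw [sum_eq_add_sum_sdiff_singleton_of_mem hyI, Nat.sub_self, pow_zero, mul_one] at hrec hrec'
  refine eq_of_reflect_sub_self_eq hdeg hdeg' ?_
  rw [hrec, hrec', add_sub_cancel_left, add_sub_cancel_left]
  refine sum_congr rfl fun z hz => ?_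
  obtain ⟨⟨hzS, hxz, hzy⟩, hzy'⟩ := by simpa using hz
  rw [ih (ρ z) (hn ▸ hρ z hzS y hy (lt_of_le_of_ne hzy hzy')) hzS hxz rfl]

lemma natDegree_sum_le_of_isGSystemOn (hρ : IsRankedOn S ρ) (hG : IsGSystemOn S ρ G) {b : α}
    (hbS : b ∈ S) (hb : ∀ x ∈ S, b ≤ x) :
    (∑ z ∈ S, G b z * (X - 1) ^ (S.sup ρ - ρ z)).natDegree ≤ S.sup ρ - ρ b := by
  refine natDegree_sum_le_of_forall_le _ _ fun z hz => ?_
  have hdeg := hG.natDegree_le hbS hz (hb z hz)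
  have hbz := hρ.rank_le hbS hz (hb z hz)
  have hzsup : ρ z ≤ S.sup ρ := le_sup hz
  calc (G b z * (X - 1) ^ (S.sup ρ - ρ z)).natDegree
      ≤ (G b z).natDegree + (S.sup ρ - ρ z) := by
        refine natDegree_mul_le.trans (Nat.add_le_add_left ?_ _)
        simpa using natDegree_pow_le_of_le (S.sup ρ - ρ z) (natDegree_X_sub_C_le (1 : ℤ))
    _ ≤ S.sup ρ - ρ b := by omega

end GPolynomials

section TwinsPoset

variable {α : Type*} [PartialOrder α] {S : Finset α} {ρ : α → ℕ}

lemma IsRankedOn.twins (h : IsRankedOn S ρ) : IsRankedOn (S ×ˢ univ) (twinsRank ρ) := by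
  constructor
  · rintro ⟨x, ε⟩ hx ⟨y, δ⟩ hy hlt
    simp only [mem_product, mem_univ, and_true] at hx hy
    rcases Prod.lt_iff.mp hlt with ⟨hxy, hεδ⟩ | ⟨hxy, hεδ⟩
    · have := h.1 x hx y hy hxy
      have : ε.toNat ≤ δ.toNat := Bool.toNat_le_toNat hεδ
      simp only [twinsRank_mk]
      omega
    · obtain ⟨rfl, rfl⟩ := Bool.lt_iff.mp hεδ
      have := h.rank_le hx hy hxy
      simp only [twinsRank_mk, Bool.toNat_false, Bool.toNat_true]
      omega
  · rintro ⟨x, ε⟩ hx ⟨y, δ⟩ hy hlt hcov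
    simp only [mem_product, mem_univ, and_true] at hx hy
    by_cases hεδ : ε = δ
    · subst hεδ
      have := h.2 x hx y hy (Prod.mk_lt_mk_iff_left.mp hlt) fun z hz ⟨hxz, hzy⟩ =>
        hcov (z, ε) (by simpa) ⟨Prod.mk_lt_mk_iff_left.mpr hxz, Prod.mk_lt_mk_iff_left.mpr hzy⟩
      simp only [twinsRank_mk, this]
      omega
    · obtain ⟨rfl, rfl⟩ : ε = false ∧ δ = true :=
        Bool.lt_iff.mp (lt_of_le_of_ne (Prod.mk_le_mk.mp hlt.le).2 hεδ)
      obtain rfl : x = y := by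
        by_contra hne
        have hxy : x ≤ y := (Prod.mk_le_mk.mp hlt.le).1
        exact hcov (x, true) (by simpa) ⟨Prod.mk_lt_mk_iff_right.mpr Bool.false_lt_true,
          Prod.mk_lt_mk_iff_left.mpr (lt_of_le_of_ne hxy hne)⟩
      simp

lemma IsLocallyEulerianOn.twins (h : IsLocallyEulerianOn S ρ) :
    IsLocallyEulerianOn (S ×ˢ univ) (twinsRank ρ) := by
  refine ⟨h.1.twins, ?_⟩
  rintro ⟨x, ε⟩ hx ⟨y, δ⟩ hy hlt
  simp only [mem_product, mem_univ, and_true] at hx hy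
  simp only [card_filter_product_univ_bool, Prod.mk_le_mk, twinsRank_mk]
  cases ε <;> cases δ
  · simpa +decide using h.2 x hx y hy (Prod.mk_lt_mk_iff_left.mp hlt)
  · simp [Nat.even_add_one, add_comm]
  · exact absurd (Prod.mk_le_mk.mp hlt.le).2 (by decide)
  · simpa +decide [Nat.even_add_one] using (h.2 x hx y hy (Prod.mk_lt_mk_iff_left.mp hlt)).symm

lemma IsLowerEulerianOn.twins (h : IsLowerEulerianOn S ρ) :
    IsLowerEulerianOn (S ×ˢ univ) (twinsRank ρ) := by
  obtain ⟨hEuler, b, hb, hmin⟩ := h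
  exact ⟨hEuler.twins, (b, false), by simpa,
    fun p hp => Prod.mk_le_mk.mpr ⟨hmin p.1 (mem_product.mp hp).1, Bool.false_le p.2⟩⟩

lemma IsGSystemOn.twins {G : α → α → ℤ[X]} (hρ : IsRankedOn S ρ) (hG : IsGSystemOn S ρ G) :
    IsGSystemOn (S ×ˢ univ) (twinsRank ρ) (fun p q => G p.1 q.1) := by
  refine ⟨fun p hp => hG.1 p.1 (mem_product.mp hp).1, ?_⟩
  rintro ⟨x, ε⟩ hx ⟨y, δ⟩ hy hlt
  simp only [mem_product, mem_univ, and_true] at hx hy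
  rw [sum_filter_product_univ_bool]
  cases ε <;> cases δ
  · simpa +decide [Prod.mk_le_mk] using hG.2 x hx y hy (Prod.mk_lt_mk_iff_left.mp hlt)
  · have hxy : x ≤ y := (Prod.mk_le_mk.mp hlt.le).1
    have hdeg := hG.natDegree_le hx hy hxy
    have hrank := hρ.rank_le hx hy hxy
    simp only [Prod.mk_le_mk, twinsRank_mk, Bool.toNat_true, Bool.toNat_false, add_zero, le_refl,
      Bool.le_true, and_true, Nat.add_sub_add_right]
    rw [sum_mul_X_sub_one_pow_succ_add _ _ fun z hz => hρ.rank_le (mem_filter.mp hz).1 hy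
      (mem_filter.mp hz).2.2, Nat.sub_add_comm hrank, reflect_succ_of_natDegree_le (by omega),
      hG.reflect_eq_sum hx hy hxy]
    exact ⟨by omega, rfl⟩
  · exact absurd (Prod.mk_le_mk.mp hlt.le).2 (by decide)
  · simpa +decide [Prod.mk_le_mk] using hG.2 x hx y hy (Prod.mk_lt_mk_iff_left.mp hlt)

theorem hPoly_eq_hPoly_twins {G : α → α → ℤ[X]} {Gpm : α × Bool → α × Bool → ℤ[X]}
    (hρ : IsRankedOn S ρ) (hG : IsGSystemOn S ρ G)
    (hGpm : IsGSystemOn (S ×ˢ univ) (twinsRank ρ) Gpm) {b : α} (hbS : b ∈ S)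
    (hb : ∀ x ∈ S, b ≤ x) :
    hPoly ρ G S b = hPoly (twinsRank ρ) Gpm (S ×ˢ univ) (b, false) := by
  have hGpm_eq : ∀ p ∈ S ×ˢ univ, Gpm (b, false) p = G b p.1 := fun p hp =>
    hGpm.unique hρ.twins.1 (hG.twins hρ) (by simpa) hp
      (Prod.mk_le_mk.mpr ⟨hb p.1 (mem_product.mp hp).1, Bool.false_le p.2⟩)
  have hsum : ∑ p ∈ S ×ˢ univ, Gpm (b, false) p * (X - 1) ^ (S.sup ρ + 1 - twinsRank ρ p) =
      X * ∑ z ∈ S, G b z * (X - 1) ^ (S.sup ρ - ρ z) := by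
    rw [sum_product_univ_bool, ← sum_mul_X_sub_one_pow_succ_add _ _ fun z hz => le_sup hz]
    congr 1 <;> refine sum_congr rfl fun z hz => ?_ <;> simp [hGpm_eq (z, _) (by simpa)]
  have hbsup : ρ b ≤ S.sup ρ := le_sup hbS
  unfold hPoly
  rw [sup_twinsRank ⟨b, hbS⟩, hsum, twinsRank_mk, Bool.toNat_false, add_zero,
    Nat.sub_add_comm hbsup, reflect_succ_X_mul (natDegree_sum_le_of_isGSystemOn hρ hG hbS hb)]

end TwinsPoset

/-- for any finite lower Eulerian poset `R` (realized as the Finset `S` with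
minimum `b` and rank function `ρ`), the twins-poset `R^±` (realized as `S ×ˢ Bool` with
the product order, `(r, false)` playing the role of `φ⁻(r) ∈ R⁻` and `(r, true)` of
`r ∈ R`, with rank function `ρ^±(r, ε) = ρ r + ε`) is a lower Eulerian poset of rank
`rk(R) + 1`, and `h(R; t) = h(R^±; t)`. -/
theorem hPoly_twins {α : Type*} [PartialOrder α] (ρ : α → ℕ) (S : Finset α)
    (hS : IsLowerEulerianOn S ρ) (b : α) (hbS : b ∈ S) (hb : ∀ x ∈ S, b ≤ x)
    (G : α → α → Polynomial ℤ) (hG : IsGSystemOn S ρ G)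
    (Gpm : α × Bool → α × Bool → Polynomial ℤ)
    (hGpm : IsGSystemOn (S ×ˢ (Finset.univ : Finset Bool))
      (fun p => ρ p.1 + p.2.toNat) Gpm) :
    IsLowerEulerianOn (S ×ˢ (Finset.univ : Finset Bool)) (fun p => ρ p.1 + p.2.toNat) ∧
    (S ×ˢ (Finset.univ : Finset Bool)).sup (fun p => ρ p.1 + p.2.toNat) - ρ b
      = (S.sup ρ - ρ b) + 1 ∧
    hPoly ρ G S b
      = hPoly (fun p => ρ p.1 + p.2.toNat) Gpm (S ×ˢ (Finset.univ : Finset Bool)) (b, false) := by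
  refine ⟨hS.twins, ?_, hPoly_eq_hPoly_twins hS.1.1 hG hGpm hbS hb⟩
  have hsup : (S ×ˢ univ).sup (fun p : α × Bool => ρ p.1 + p.2.toNat) = S.sup ρ + 1 :=
    sup_twinsRank ⟨b, hbS⟩
  have hbsup : ρ b ≤ S.sup ρ := le_sup hbS
  omega

end
end

section
/- For any Eulerian poset R, g(R^±; t) = g(R; t), where R^± is the twins-poset born from R, an Eulerian poset of rank rk(R) + 1. -/
attribute [local instance] Classical.propDecidable

noncomputable section

open Polynomial

open Polynomial in
lemma my_reflect_sub (N : ℕ) (f g : Polynomial ℤ) :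
    reflect N (f - g) = reflect N f - reflect N g := by
  ext i
  simp [coeff_reflect, coeff_sub]

open Polynomial in
lemma my_gUnique (r : ℕ) (F G : Polynomial ℤ) (hF : 2 * F.natDegree < r)
    (hG : 2 * G.natDegree < r)
    (h : reflect r F - F = reflect r G - G) : F = G := by
  by_contra hne
  have hD : F - G ≠ 0 := sub_ne_zero.mpr hne
  have hrefl : reflect r (F - G) = F - G := by
    rw [my_reflect_sub]
    rw [sub_eq_sub_iff_sub_eq_sub] at h
    exact h
  set D := F - G with hDdef
  have hdle : D.natDegree ≤ max F.natDegree G.natDegree := natDegree_sub_le F G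
  have hd : 2 * D.natDegree < r := by
    rcases le_total F.natDegree G.natDegree with h' | h'
    · rw [max_eq_right h'] at hdle; omega
    · rw [max_eq_left h'] at hdle; omega
  have h1 : D.coeff D.natDegree ≠ 0 := by
    rw [coeff_natDegree]
    exact leadingCoeff_ne_zero.mpr hD
  have h2 : D.coeff D.natDegree = D.coeff (r - D.natDegree) := by
    nth_rewrite 3 [← hrefl]
    rw [coeff_reflect, revAt_le (by omega)]
    congr 1
    omega
  have h3 : D.coeff (r - D.natDegree) = 0 :=
    coeff_eq_zero_of_natDegree_lt (by omega)
  exact h1 (h2.trans h3)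

open Polynomial in
lemma my_reflect_succ (n : ℕ) (p : Polynomial ℤ) (h : p.natDegree ≤ n) :
    reflect (n + 1) p = X * reflect n p := by
  ext i
  rcases i with _ | i
  · rw [coeff_reflect, revAt_le (Nat.zero_le _), Nat.sub_zero, mul_comm, coeff_mul_X_zero]
    exact coeff_eq_zero_of_natDegree_lt (by omega)
  · rw [coeff_X_mul, coeff_reflect, coeff_reflect]
    by_cases hi : i ≤ n
    · rw [revAt_le (by omega), revAt_le hi]
      congr 1
      omega
    · rw [revAt_eq_self_of_lt (by omega), revAt_eq_self_of_lt (by omega)]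
      rw [coeff_eq_zero_of_natDegree_lt (by omega), coeff_eq_zero_of_natDegree_lt (by omega)]

/-- for any finite Eulerian poset `R` (realized as the Finset `S` with
minimum `b`, maximum `t`, rank function `ρ`), the twins-poset `R^±` (realized as
`S ×ˢ Bool` with the product order and rank function `ρ^±(r, ε) = ρ r + ε`) is an
Eulerian poset of rank `rk(R) + 1` with maximum `(t, true)` (i.e. `1̂_R`), and
`g(R^±; t) = g(R; t)`. -/
theorem gPoly_twins {α : Type*} [PartialOrder α] (ρ : α → ℕ) (S : Finset α)
    (hS : IsEulerianOn S ρ) (b : α) (hbS : b ∈ S) (hb : ∀ x ∈ S, b ≤ x)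
    (t : α) (htS : t ∈ S) (ht : ∀ x ∈ S, x ≤ t)
    (G : α → α → Polynomial ℤ) (hG : IsGSystemOn S ρ G)
    (Gpm : α × Bool → α × Bool → Polynomial ℤ)
    (hGpm : IsGSystemOn (S ×ˢ (Finset.univ : Finset Bool))
      (fun p => ρ p.1 + p.2.toNat) Gpm) :
    IsEulerianOn (S ×ˢ (Finset.univ : Finset Bool)) (fun p => ρ p.1 + p.2.toNat) ∧
    (∀ p ∈ S ×ˢ (Finset.univ : Finset Bool), p ≤ (t, true)) ∧
    (S ×ˢ (Finset.univ : Finset Bool)).sup (fun p => ρ p.1 + p.2.toNat) - ρ b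
      = (S.sup ρ - ρ b) + 1 ∧
    Gpm (b, false) (t, true) = G b t := by
  classical
  obtain ⟨⟨⟨⟨hstrict, hcover⟩, heuler⟩, -⟩, -⟩ := hS
  have hmem : ∀ p : α × Bool, p ∈ S ×ˢ (Finset.univ : Finset Bool) ↔ p.1 ∈ S := by
    intro p; simp [Finset.mem_product]
  have hmono : ∀ x ∈ S, ∀ y ∈ S, x ≤ y → ρ x ≤ ρ y := by
    intro x hx y hy hxy
    rcases hxy.lt_or_eq with h | h
    · exact (hstrict x hx y hy h).le
    · rw [h]
  have hmax : ∀ p ∈ S ×ˢ (Finset.univ : Finset Bool), p ≤ (t, true) := by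
    rintro ⟨z, j⟩ hp
    rw [hmem] at hp
    exact Prod.mk_le_mk.mpr ⟨ht z hp, Bool.le_true j⟩
  have hsup : (S ×ˢ (Finset.univ : Finset Bool)).sup (fun p => ρ p.1 + p.2.toNat)
      = ρ t + 1 := by
    apply le_antisymm
    · apply Finset.sup_le
      rintro ⟨z, j⟩ hp
      rw [hmem] at hp
      have := hmono z hp t htS (ht z hp)
      have hj : j.toNat ≤ 1 := by cases j <;> simp
      simp only []
      omega
    · have : ((t, true) : α × Bool) ∈ S ×ˢ (Finset.univ : Finset Bool) := (hmem _).mpr htS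
      exact Finset.le_sup (f := fun p : α × Bool => ρ p.1 + p.2.toNat) this
  have hsupS : S.sup ρ = ρ t := by
    apply le_antisymm
    · exact Finset.sup_le fun z hz => hmono z hz t htS (ht z hz)
    · exact Finset.le_sup htS
  refine ⟨?_, hmax, ?_, ?_⟩
  · refine ⟨⟨⟨⟨?_, ?_⟩, ?_⟩, ⟨(b,false), (hmem _).mpr hbS, ?_⟩⟩, ⟨(t,true), (hmem _).mpr htS, hmax⟩⟩
    · -- strictly increasing rank
      rintro ⟨x, e⟩ hp ⟨y, f⟩ hq hlt
      rw [hmem] at hp hq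
      obtain ⟨hxy, hef⟩ := Prod.mk_le_mk.mp hlt.le
      rcases hxy.lt_or_eq with h | h
      · have h1 := hstrict x hp y hq h
        have h2 : e.toNat ≤ f.toNat := by cases e <;> cases f <;> revert hef <;> decide
        simp only []
        omega
      · subst h
        cases e <;> cases f
        · exact absurd hlt (lt_irrefl _)
        · simp
        · exact absurd hef (by decide)
        · exact absurd hlt (lt_irrefl _)
    · -- covers
      rintro ⟨x, e⟩ hp ⟨y, f⟩ hq hlt hmid
      rw [hmem] at hp hq
      obtain ⟨hxy, hef⟩ := Prod.mk_le_mk.mp hlt.le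
      cases e <;> cases f
      · have hxy' : x < y := lt_of_le_of_ne hxy (by rintro rfl; exact absurd hlt (lt_irrefl _))
        have hm : ∀ z ∈ S, ¬ (x < z ∧ z < y) := by
          rintro z hz ⟨h1, h2⟩
          exact hmid (z, false) ((hmem _).mpr hz)
            ⟨Prod.mk_lt_mk.mpr (Or.inl ⟨h1, le_rfl⟩), Prod.mk_lt_mk.mpr (Or.inl ⟨h2, le_rfl⟩)⟩
        have := hcover x hp y hq hxy' hm
        simp only [Bool.toNat_false]
        omega
      · rcases eq_or_lt_of_le hxy with rfl | hxy'
        · simp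
        · exfalso
          exact hmid (x, true) ((hmem _).mpr hp)
            ⟨Prod.mk_lt_mk.mpr (Or.inr ⟨le_rfl, by decide⟩),
             Prod.mk_lt_mk.mpr (Or.inl ⟨hxy', le_rfl⟩)⟩
      · exact absurd hef (by decide)
      · have hxy' : x < y := lt_of_le_of_ne hxy (by rintro rfl; exact absurd hlt (lt_irrefl _))
        have hm : ∀ z ∈ S, ¬ (x < z ∧ z < y) := by
          rintro z hz ⟨h1, h2⟩
          exact hmid (z, true) ((hmem _).mpr hz)
            ⟨Prod.mk_lt_mk.mpr (Or.inl ⟨h1, le_rfl⟩), Prod.mk_lt_mk.mpr (Or.inl ⟨h2, le_rfl⟩)⟩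
        have := hcover x hp y hq hxy' hm
        simp only [Bool.toNat_true]
        omega
    · -- Euler condition
      have key : ∀ (Q : α × Bool → Prop) (inst : DecidablePred Q),
          (@Finset.filter _ Q inst (S ×ˢ (Finset.univ : Finset Bool))).card
            = ∑ z ∈ S, ((if Q (z, true) then 1 else 0) + (if Q (z, false) then 1 else 0)) := by
        intro Q inst
        rw [Finset.card_filter, Finset.sum_product]
        refine Finset.sum_congr rfl fun z hz => ?_
        rw [Fintype.sum_bool]
      have heuler' : ∀ x ∈ S, ∀ y ∈ S, x < y →
          ∑ z ∈ S, (if x ≤ z ∧ z ≤ y ∧ Even (ρ z) then 1 else 0)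
            = ∑ z ∈ S, (if x ≤ z ∧ z ≤ y ∧ ¬ Even (ρ z) then 1 else 0) := by
        intro x hx y hy hxy
        rw [← Finset.card_filter, ← Finset.card_filter]
        exact heuler x hx y hy hxy
      rintro ⟨x, e⟩ hp ⟨y, f⟩ hq hlt
      rw [hmem] at hp hq
      obtain ⟨hxy, hef⟩ := Prod.mk_le_mk.mp hlt.le
      beta_reduce
      rw [key _ _, key _ _]
      cases e <;> cases f
      · have hxy' : x < y := lt_of_le_of_ne hxy (by rintro rfl; exact absurd hlt (lt_irrefl _))
        trans (∑ z ∈ S, if x ≤ z ∧ z ≤ y ∧ Even (ρ z) then 1 else 0)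
        · refine Finset.sum_congr rfl fun z hz => ?_
          by_cases h1 : x ≤ z <;> by_cases h2 : z ≤ y <;> by_cases h3 : Even (ρ z) <;>
            simp [Prod.mk_le_mk, h1, h2, h3, Bool.le_true, Bool.false_le, show ¬((true:Bool) ≤ false) from by decide]
        rw [heuler' x hp y hq hxy']
        refine Finset.sum_congr rfl fun z hz => ?_
        by_cases h1 : x ≤ z <;> by_cases h2 : z ≤ y <;> by_cases h3 : Even (ρ z) <;>
          simp [Prod.mk_le_mk, h1, h2, h3, Bool.le_true, Bool.false_le, show ¬((true:Bool) ≤ false) from by decide]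
      · refine Finset.sum_congr rfl fun z hz => ?_
        by_cases h1 : x ≤ z <;> by_cases h2 : z ≤ y <;> by_cases h3 : Even (ρ z) <;>
          simp [Prod.mk_le_mk, h1, h2, h3, Nat.even_add_one, Bool.le_true, Bool.false_le, show ¬((true:Bool) ≤ false) from by decide]
      · exact absurd hef (by decide)
      · have hxy' : x < y := lt_of_le_of_ne hxy (by rintro rfl; exact absurd hlt (lt_irrefl _))
        trans (∑ z ∈ S, if x ≤ z ∧ z ≤ y ∧ ¬ Even (ρ z) then 1 else 0)
        · refine Finset.sum_congr rfl fun z hz => ?_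
          by_cases h1 : x ≤ z <;> by_cases h2 : z ≤ y <;> by_cases h3 : Even (ρ z) <;>
            simp [Prod.mk_le_mk, h1, h2, h3, Nat.even_add_one, Bool.le_true, Bool.false_le, show ¬((true:Bool) ≤ false) from by decide]
        rw [← heuler' x hp y hq hxy']
        refine Finset.sum_congr rfl fun z hz => ?_
        by_cases h1 : x ≤ z <;> by_cases h2 : z ≤ y <;> by_cases h3 : Even (ρ z) <;>
          simp [Prod.mk_le_mk, h1, h2, h3, Nat.even_add_one, Bool.le_true, Bool.false_le, show ¬((true:Bool) ≤ false) from by decide]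
    · rintro ⟨z, j⟩ hp
      exact Prod.mk_le_mk.mpr ⟨hb z ((hmem _).mp hp), Bool.false_le j⟩
  · rw [hsup, hsupS]
    have := hmono b hbS t htS (hb t htS)
    omega
  · have hGdeg : ∀ x ∈ S, ∀ y ∈ S, x ≤ y → 2 * (G x y).natDegree ≤ ρ y - ρ x := by
      intro x hx y hy hxy
      rcases hxy.lt_or_eq with h | h
      · exact (hG.2 x hx y hy h).1.le
      · subst h; simp [hG.1 x hx]
    have hGrec : ∀ x ∈ S, ∀ y ∈ S, x ≤ y →
        reflect (ρ y - ρ x) (G x y)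
          = ∑ z ∈ S.filter (fun z => x ≤ z ∧ z ≤ y), G x z * (X - 1) ^ (ρ y - ρ z) := by
      intro x hx y hy hxy
      rcases hxy.lt_or_eq with h | h
      · exact (hG.2 x hx y hy h).2
      · subst h
        have hf : S.filter (fun z => x ≤ z ∧ z ≤ x) = {x} := by
          ext z
          simp only [Finset.mem_filter, Finset.mem_singleton]
          constructor
          · rintro ⟨hz, h1, h2⟩; exact le_antisymm h2 h1
          · rintro rfl; exact ⟨hx, le_rfl, le_rfl⟩
        rw [hf, Finset.sum_singleton, hG.1 x hx, Nat.sub_self]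
        simp [Polynomial.reflect_one]
    have low : ∀ x ∈ S, ∀ y ∈ S, x ≤ y →
        (∀ z ∈ S, x ≤ z → z < y → Gpm (x, false) (z, false) = G x z) →
        Gpm (x, false) (y, false) = G x y := by
      intro x hx y hy hxy hIH
      rcases hxy.lt_or_eq with h | h
      swap
      · subst h; rw [hGpm.1 _ ((hmem _).mpr hx), hG.1 x hx]
      obtain ⟨hdeg, hrec⟩ := hGpm.2 (x, false) ((hmem _).mpr hx) (y, false) ((hmem _).mpr hy)
        (Prod.mk_lt_mk.mpr (Or.inl ⟨h, le_rfl⟩))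
      beta_reduce at hdeg hrec
      try simp only [Finset.filter_congr_decidable] at hrec
      simp only [Bool.toNat_false, add_zero] at hdeg hrec
      have hρ : ρ x ≤ ρ y := hmono x hx y hy hxy
      have hyT : y ∈ S.filter (fun z => x ≤ z ∧ z ≤ y) := Finset.mem_filter.mpr ⟨hy, hxy, le_rfl⟩
      have hsum : ∀ (inst : DecidablePred (fun z : α × Bool => (x, false) ≤ z ∧ z ≤ (y, false))),
          ∑ z ∈ @Finset.filter _ (fun z => (x, false) ≤ z ∧ z ≤ (y, false)) inst
            (S ×ˢ (Finset.univ : Finset Bool)),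
            Gpm (x, false) z * (X - 1) ^ (ρ y - (ρ z.1 + z.2.toNat))
          = ∑ z ∈ S.filter (fun z => x ≤ z ∧ z ≤ y),
              Gpm (x, false) (z, false) * (X - 1) ^ (ρ y - ρ z) := by
        intro inst
        rw [Finset.sum_filter, Finset.sum_product, Finset.sum_filter]
        refine Finset.sum_congr rfl fun z hz => ?_
        rw [Fintype.sum_bool]
        by_cases h1 : x ≤ z <;> by_cases h2 : z ≤ y <;>
          simp [Prod.mk_le_mk, h1, h2, Bool.le_true, Bool.false_le,
            show ¬((true:Bool) ≤ false) from by decide]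
      rw [hsum _] at hrec
      have hsum2 : ∑ z ∈ S.filter (fun z => x ≤ z ∧ z ≤ y),
            Gpm (x, false) (z, false) * (X - 1) ^ (ρ y - ρ z)
          = Gpm (x, false) (y, false) + (reflect (ρ y - ρ x) (G x y) - G x y) := by
        rw [← Finset.add_sum_erase _ _ hyT, Nat.sub_self, pow_zero, mul_one]
        congr 1
        have e1 : ∑ z ∈ (S.filter (fun z => x ≤ z ∧ z ≤ y)).erase y,
              Gpm (x, false) (z, false) * (X - 1) ^ (ρ y - ρ z)
            = ∑ z ∈ (S.filter (fun z => x ≤ z ∧ z ≤ y)).erase y,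
              G x z * (X - 1) ^ (ρ y - ρ z) := by
          refine Finset.sum_congr rfl fun z hz => ?_
          obtain ⟨hzne, hzf⟩ := Finset.mem_erase.mp hz
          obtain ⟨hzS, hxz, hzy⟩ := Finset.mem_filter.mp hzf
          rw [hIH z hzS hxz (lt_of_le_of_ne hzy hzne)]
        rw [e1, hGrec x hx y hy hxy]
        have h2 := Finset.add_sum_erase _ (fun z => G x z * (X - 1) ^ (ρ y - ρ z)) hyT
        rw [← h2]
        beta_reduce
        rw [Nat.sub_self, pow_zero, mul_one]
        ring
      rw [hsum2] at hrec
      exact my_gUnique (ρ y - ρ x) _ _ hdeg (hG.2 x hx y hy h).1 (by rw [hrec]; ring)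
    have top : ∀ x ∈ S, ∀ y ∈ S, x ≤ y →
        (∀ z ∈ S, x ≤ z → z < y → Gpm (x, true) (z, true) = G x z) →
        Gpm (x, true) (y, true) = G x y := by
      intro x hx y hy hxy hIH
      rcases hxy.lt_or_eq with h | h
      swap
      · subst h; rw [hGpm.1 _ ((hmem _).mpr hx), hG.1 x hx]
      obtain ⟨hdeg, hrec⟩ := hGpm.2 (x, true) ((hmem _).mpr hx) (y, true) ((hmem _).mpr hy)
        (Prod.mk_lt_mk.mpr (Or.inl ⟨h, le_rfl⟩))
      beta_reduce at hdeg hrec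
      try simp only [Finset.filter_congr_decidable] at hrec
      simp only [Bool.toNat_true] at hdeg hrec
      have hρ : ρ x ≤ ρ y := hmono x hx y hy hxy
      rw [show ρ y + 1 - (ρ x + 1) = ρ y - ρ x from by omega] at hdeg hrec
      have hyT : y ∈ S.filter (fun z => x ≤ z ∧ z ≤ y) := Finset.mem_filter.mpr ⟨hy, hxy, le_rfl⟩
      have hsum : ∀ (inst : DecidablePred (fun z : α × Bool => (x, true) ≤ z ∧ z ≤ (y, true))),
          ∑ z ∈ @Finset.filter _ (fun z => (x, true) ≤ z ∧ z ≤ (y, true)) inst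
            (S ×ˢ (Finset.univ : Finset Bool)),
            Gpm (x, true) z * (X - 1) ^ (ρ y + 1 - (ρ z.1 + z.2.toNat))
          = ∑ z ∈ S.filter (fun z => x ≤ z ∧ z ≤ y),
              Gpm (x, true) (z, true) * (X - 1) ^ (ρ y - ρ z) := by
        intro inst
        rw [Finset.sum_filter, Finset.sum_product, Finset.sum_filter]
        refine Finset.sum_congr rfl fun z hz => ?_
        rw [Fintype.sum_bool]
        by_cases h1 : x ≤ z <;> by_cases h2 : z ≤ y <;>
          simp [Prod.mk_le_mk, h1, h2, Bool.le_true, Bool.false_le,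
            show ¬((true:Bool) ≤ false) from by decide,
            show ρ y + 1 - (ρ z + 1) = ρ y - ρ z from by omega]
      rw [hsum _] at hrec
      have hsum2 : ∑ z ∈ S.filter (fun z => x ≤ z ∧ z ≤ y),
            Gpm (x, true) (z, true) * (X - 1) ^ (ρ y - ρ z)
          = Gpm (x, true) (y, true) + (reflect (ρ y - ρ x) (G x y) - G x y) := by
        rw [← Finset.add_sum_erase _ _ hyT, Nat.sub_self, pow_zero, mul_one]
        congr 1
        have e1 : ∑ z ∈ (S.filter (fun z => x ≤ z ∧ z ≤ y)).erase y,
              Gpm (x, true) (z, true) * (X - 1) ^ (ρ y - ρ z)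
            = ∑ z ∈ (S.filter (fun z => x ≤ z ∧ z ≤ y)).erase y,
              G x z * (X - 1) ^ (ρ y - ρ z) := by
          refine Finset.sum_congr rfl fun z hz => ?_
          obtain ⟨hzne, hzf⟩ := Finset.mem_erase.mp hz
          obtain ⟨hzS, hxz, hzy⟩ := Finset.mem_filter.mp hzf
          rw [hIH z hzS hxz (lt_of_le_of_ne hzy hzne)]
        rw [e1, hGrec x hx y hy hxy]
        have h2 := Finset.add_sum_erase _ (fun z => G x z * (X - 1) ^ (ρ y - ρ z)) hyT
        rw [← h2]
        beta_reduce
        rw [Nat.sub_self, pow_zero, mul_one]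
        ring
      rw [hsum2] at hrec
      exact my_gUnique (ρ y - ρ x) _ _ hdeg (hG.2 x hx y hy h).1 (by rw [hrec]; ring)
    have mixed : ∀ x ∈ S, ∀ y ∈ S, x ≤ y →
        (∀ z ∈ S, x ≤ z → z ≤ y → Gpm (x, false) (z, false) = G x z) →
        (∀ z ∈ S, x ≤ z → z < y → Gpm (x, false) (z, true) = G x z) →
        Gpm (x, false) (y, true) = G x y := by
      intro x hx y hy hxy hA hC
      have hρ : ρ x ≤ ρ y := hmono x hx y hy hxy
      have hlt : ((x, false) : α × Bool) < (y, true) :=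
        lt_of_le_of_ne (Prod.mk_le_mk.mpr ⟨hxy, Bool.false_le _⟩) (by simp)
      obtain ⟨hdeg, hrec⟩ := hGpm.2 (x, false) ((hmem _).mpr hx) (y, true) ((hmem _).mpr hy) hlt
      beta_reduce at hdeg hrec
      try simp only [Finset.filter_congr_decidable] at hrec
      simp only [Bool.toNat_true, Bool.toNat_false, add_zero] at hdeg hrec
      rw [show ρ y + 1 - ρ x = (ρ y - ρ x) + 1 from by omega] at hdeg hrec
      have hyT : y ∈ S.filter (fun z => x ≤ z ∧ z ≤ y) := Finset.mem_filter.mpr ⟨hy, hxy, le_rfl⟩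
      have hsum : ∀ (inst : DecidablePred (fun z : α × Bool => (x, false) ≤ z ∧ z ≤ (y, true))),
          ∑ z ∈ @Finset.filter _ (fun z => (x, false) ≤ z ∧ z ≤ (y, true)) inst
            (S ×ˢ (Finset.univ : Finset Bool)),
            Gpm (x, false) z * (X - 1) ^ (ρ y + 1 - (ρ z.1 + z.2.toNat))
          = (∑ z ∈ S.filter (fun z => x ≤ z ∧ z ≤ y),
              Gpm (x, false) (z, true) * (X - 1) ^ (ρ y - ρ z))
            + ∑ z ∈ S.filter (fun z => x ≤ z ∧ z ≤ y),
              G x z * (X - 1) ^ ((ρ y - ρ z) + 1) := by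
        intro inst
        rw [Finset.sum_filter, Finset.sum_product, Finset.sum_filter, Finset.sum_filter,
          ← Finset.sum_add_distrib]
        refine Finset.sum_congr rfl fun z hz => ?_
        rw [Fintype.sum_bool]
        by_cases h1 : x ≤ z <;> by_cases h2 : z ≤ y
        · have hρz : ρ z ≤ ρ y := hmono z hz y hy h2
          rw [hA z hz h1 h2] at *
          simp [Prod.mk_le_mk, h1, h2, Bool.le_true, Bool.false_le,
            show ρ y + 1 - (ρ z + 1) = ρ y - ρ z from by omega,
            show ρ y + 1 - ρ z = (ρ y - ρ z) + 1 from by omega]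
        · simp [Prod.mk_le_mk, h1, h2]
        · simp [Prod.mk_le_mk, h1, h2]
        · simp [Prod.mk_le_mk, h1, h2]
      rw [hsum _] at hrec
      have hsum1 : ∑ z ∈ S.filter (fun z => x ≤ z ∧ z ≤ y),
            G x z * (X - 1) ^ ((ρ y - ρ z) + 1)
          = (X - 1) * reflect (ρ y - ρ x) (G x y) := by
        rw [hGrec x hx y hy hxy, Finset.mul_sum]
        refine Finset.sum_congr rfl fun z hz => ?_
        rw [pow_succ]
        ring
      have hsum2 : ∑ z ∈ S.filter (fun z => x ≤ z ∧ z ≤ y),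
            Gpm (x, false) (z, true) * (X - 1) ^ (ρ y - ρ z)
          = Gpm (x, false) (y, true) + (reflect (ρ y - ρ x) (G x y) - G x y) := by
        rw [← Finset.add_sum_erase _ _ hyT, Nat.sub_self, pow_zero, mul_one]
        congr 1
        have e1 : ∑ z ∈ (S.filter (fun z => x ≤ z ∧ z ≤ y)).erase y,
              Gpm (x, false) (z, true) * (X - 1) ^ (ρ y - ρ z)
            = ∑ z ∈ (S.filter (fun z => x ≤ z ∧ z ≤ y)).erase y,
              G x z * (X - 1) ^ (ρ y - ρ z) := by
          refine Finset.sum_congr rfl fun z hz => ?_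
          obtain ⟨hzne, hzf⟩ := Finset.mem_erase.mp hz
          obtain ⟨hzS, hxz, hzy⟩ := Finset.mem_filter.mp hzf
          rw [hC z hzS hxz (lt_of_le_of_ne hzy hzne)]
        rw [e1, hGrec x hx y hy hxy]
        have h2 := Finset.add_sum_erase _ (fun z => G x z * (X - 1) ^ (ρ y - ρ z)) hyT
        rw [← h2]
        beta_reduce
        rw [Nat.sub_self, pow_zero, mul_one]
        ring
      rw [hsum1, hsum2] at hrec
      have hdle : (G x y).natDegree ≤ ρ y - ρ x := by
        have := hGdeg x hx y hy hxy; omega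
      refine my_gUnique ((ρ y - ρ x) + 1) _ _ hdeg (by have := hGdeg x hx y hy hxy; omega) ?_
      rw [hrec, my_reflect_succ _ _ hdle]
      ring
    have main : ∀ n : ℕ, ∀ x ∈ S, ∀ y ∈ S, x ≤ y → ρ y - ρ x ≤ n →
        Gpm (x, false) (y, false) = G x y ∧ Gpm (x, true) (y, true) = G x y ∧
          Gpm (x, false) (y, true) = G x y := by
      intro n
      induction n with
      | zero =>
        intro x hx y hy hxy hn
        have hxy' : x = y := by
          rcases hxy.lt_or_eq with h | h
          · have h1 := hstrict x hx y hy h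
            have h2 := hmono x hx y hy hxy
            omega
          · exact h
        subst hxy'
        refine ⟨(hGpm.1 _ ((hmem _).mpr hx)).trans (hG.1 x hx).symm,
          (hGpm.1 _ ((hmem _).mpr hx)).trans (hG.1 x hx).symm, ?_⟩
        refine mixed x hx x hx le_rfl (fun z hz h1 h2 => ?_)
          (fun z hz h1 h2 => absurd (h1.trans_lt h2) (lt_irrefl x))
        have hzx : z = x := le_antisymm h2 h1
        subst hzx
        exact (hGpm.1 _ ((hmem _).mpr hx)).trans (hG.1 z hz).symm
      | succ n ih =>
        intro x hx y hy hxy hn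
        have hA : Gpm (x, false) (y, false) = G x y := by
          refine low x hx y hy hxy (fun z hz h1 h2 => ?_)
          exact (ih x hx z hz h1 (by have := hstrict z hz y hy h2; omega)).1
        have hB : Gpm (x, true) (y, true) = G x y := by
          refine top x hx y hy hxy (fun z hz h1 h2 => ?_)
          exact (ih x hx z hz h1 (by have := hstrict z hz y hy h2; omega)).2.1
        refine ⟨hA, hB, ?_⟩
        refine mixed x hx y hy hxy (fun z hz h1 h2 => ?_) (fun z hz h1 h2 => ?_)
        · rcases h2.lt_or_eq with h | h
          · exact (ih x hx z hz h1 (by have := hstrict z hz y hy h; omega)).1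
          · subst h; exact hA
        · exact (ih x hx z hz h1 (by have := hstrict z hz y hy h2; omega)).2.2
    exact (main (ρ t - ρ b) b hbS t htS (hb t htS) le_rfl).2.2

end
end

section
/- Let P_0, P_1, …, P_k ⊂ ℝ^{n−k} be nonempty lattice polytopes and let P = P_0 ∗ P_1 ∗ ⋯ ∗ P_k ⊂ ℝⁿ be their Cayley sum. Then: (1) codeg(P) ≥ k + 1, i.e. for every integer 1 ≤ λ ≤ k, the relative interior of λP contains no lattice point; and (2) codeg(P) = k + 1 if and only if the relative interior of the Minkowski sum P_0 + P_1 + ⋯ + P_k contains a lattice point. -/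
open scoped Pointwise

noncomputable section

/-- A point of `ℝⁿ` is a lattice point if all its coordinates are integers. -/
def IsLatticePoint {n : ℕ} (x : Fin n → ℝ) : Prop := ∀ i, ∃ z : ℤ, x i = (z : ℝ)

/-- A lattice polytope: the convex hull of finitely many lattice points. -/
def IsLatticePolytope {n : ℕ} (P : Set (Fin n → ℝ)) : Prop :=
  ∃ V : Finset (Fin n → ℝ), (∀ v ∈ V, IsLatticePoint v) ∧
    P = convexHull ℝ (V : Set (Fin n → ℝ))

/-- The dimension of a subset of `ℝⁿ`: the rank of the direction of its affine span. -/
def polyDim {n : ℕ} (S : Set (Fin n → ℝ)) : ℕ :=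
  Module.finrank ℝ (affineSpan ℝ S).direction

/-- A face of a convex set: an extreme convex subset (this includes `∅` and the set itself). -/
def IsFace {n : ℕ} (K F : Set (Fin n → ℝ)) : Prop :=
  IsExtreme ℝ K F ∧ Convex ℝ F

/-- The `d`-dimensional lattice volume (normalized so that a fundamental domain of the
lattice of the affine span has volume `1`, and multiplied by `d!`), computed via the
Ehrhart-type limit `d! · #(m·S ∩ ℤⁿ)/m^d`.  It is `0` if `dim S < d`. -/
def latticeVol {n : ℕ} (d : ℕ) (S : Set (Fin n → ℝ)) : ℝ :=
  Filter.limUnder Filter.atTop fun m : ℕ =>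
    ((d.factorial : ℝ) * ({x ∈ (m : ℝ) • S | IsLatticePoint x}.ncard : ℝ)) / (m : ℝ) ^ d

/-- A polytope `P` contained in a cone `C` is convenient if `dim (P ∩ F) = dim F` for
every nonempty face `F` of `C`. -/
def IsConvenient {n : ℕ} (C P : Set (Fin n → ℝ)) : Prop :=
  P ⊆ C ∧ ∀ F : Set (Fin n → ℝ), IsFace C F → F.Nonempty → polyDim (P ∩ F) = polyDim F

/-- The Newton number `ν_C(P) = Σ_F (−1)^{n−dim F} Vol_ℤ(P ∩ F)`, the sum running over
all nonempty faces `F` of the `n`-dimensional cone `C`.  (Note `(−1)^{n−dim F} = (−1)^{n+dim F}`.) -/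
def newtonNumber {n : ℕ} (C P : Set (Fin n → ℝ)) : ℝ :=
  ∑ᶠ (F : Set (Fin n → ℝ)) (_ : IsFace C F ∧ F.Nonempty),
    (-1 : ℝ) ^ (n + polyDim F) * latticeVol (polyDim F) (P ∩ F)

/-- The cone `ℝ^m_{≥0} ⊕ ℝ^{n−m} ⊂ ℝⁿ`. -/
def orthant (n m : ℕ) : Set (Fin n → ℝ) := {x | ∀ i : Fin n, (i : ℕ) < m → 0 ≤ x i}


/-- The codegree of a lattice polytope `P`: the smallest integer `λ ≥ 1` such that the
dilate `λP` contains a lattice point in its relative interior. -/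
def codeg {n : ℕ} (P : Set (Fin n → ℝ)) : ℕ :=
  sInf {l : ℕ | 1 ≤ l ∧ ∃ x, IsLatticePoint x ∧ x ∈ intrinsicInterior ℝ ((l : ℝ) • P)}

/-! The last `k` coordinates (the heights) of a point of the Cayley sum `P` are nonnegative with
sum at most `1`; on the relative interior these inequalities are strict, because `P` contains
`P₀` (all heights `0`) and each `Q j + e_{m+j}` (height `1` in position `j`). A lattice point in
the relative interior of `λP` thus has integer heights `≥ 1` summing to less than `λ`, which forces
`λ ≥ k + 1`, and for `λ = k + 1` all its heights equal `1`. The slice of `(k+1)P` at heights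
`(1, …, 1)` is the Minkowski sum `P₀ + ∑ⱼ Q j` translated by the lattice vector `∑ⱼ e_{m+j}`; as
this slice meets the relative interior of `(k+1)P`, its relative interior is the slice of the
relative interior of `(k+1)P`. -/

open Set AffineMap

section IntrinsicInterior

variable {V : Type*} [NormedAddCommGroup V] [NormedSpace ℝ V] {s : Set V} {x y : V}

theorem exists_one_lt_homothety_mem_of_mem_intrinsicInterior
    (hx : x ∈ intrinsicInterior ℝ s) (hy : y ∈ s) :
    ∃ t : ℝ, 1 < t ∧ homothety y t x ∈ s := by
  obtain ⟨x', hx', rfl⟩ := mem_intrinsicInterior.1 hx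
  have : Nonempty (affineSpan ℝ s) := ⟨x'⟩
  let y' : affineSpan ℝ s := ⟨y, subset_affineSpan ℝ s hy⟩
  obtain ⟨t, ht, ht1⟩ := ((eventually_homothety_mem_of_mem_interior ℝ y' hx').filter_mono
    nhdsWithin_le_nhds |>.and (self_mem_nhdsWithin (s := Ioi (1 : ℝ)))).exists
  refine ⟨t, ht1, ?_⟩
  simpa [homothety_apply, y'] using ht

theorem homothety_mem_intrinsicInterior (hs : Convex ℝ s) (hx : x ∈ intrinsicInterior ℝ s)
    (hy : y ∈ s) {t : ℝ} (ht₀ : 0 < t) (ht₁ : t ≤ 1) :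
    homothety y t x ∈ intrinsicInterior ℝ s := by
  obtain ⟨x', hx', rfl⟩ := mem_intrinsicInterior.1 hx
  have : Nonempty (affineSpan ℝ s) := ⟨x'⟩
  let y' : affineSpan ℝ s := ⟨y, subset_affineSpan ℝ s hy⟩
  have hcoe : ∀ p : affineSpan ℝ s, (homothety y' t p : V) = homothety y t (p : V) := by
    intro p; simp [homothety_apply, y']
  have hmaps : homothety y' t '' interior ((↑) ⁻¹' s) ⊆ interior ((↑) ⁻¹' s) := by
    refine interior_maximal ?_ (homothety_isOpenMap y' t ht₀.ne' _ isOpen_interior)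
    rintro _ ⟨p, hp, rfl⟩
    have hp : p ∈ ((↑) ⁻¹' s : Set (affineSpan ℝ s)) := interior_subset hp
    rw [mem_preimage, hcoe, homothety_eq_lineMap]
    exact hs.lineMap_mem hy hp ⟨ht₀.le, ht₁⟩
  exact mem_intrinsicInterior.2 ⟨_, hmaps (mem_image_of_mem _ hx'), hcoe x'⟩

theorem mem_intrinsicInterior_of_homothety_mem (hs : Convex ℝ s) {w : V}
    (hw : w ∈ intrinsicInterior ℝ s) {t : ℝ} (ht : 1 < t) (hz : homothety w t x ∈ s) :
    x ∈ intrinsicInterior ℝ s := by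
  -- `x` lies on the open segment from `w` to `homothety w t x`
  have hx_eq : homothety (homothety w t x) (1 - t⁻¹) w = x := by
    simp only [homothety_apply, vsub_eq_sub, vadd_eq_add]
    match_scalars <;> field_simp <;> ring
  rw [← hx_eq]
  exact homothety_mem_intrinsicInterior hs hw hz (by simp [inv_lt_one_of_one_lt₀ ht])
    (by simp [(inv_pos.2 (zero_lt_one.trans ht)).le])

theorem mem_intrinsicInterior_iff_forall_exists_homothety_mem [FiniteDimensional ℝ V]
    (hs : Convex ℝ s) :
    x ∈ intrinsicInterior ℝ s ↔ x ∈ s ∧ ∀ y ∈ s, ∃ t : ℝ, 1 < t ∧ homothety y t x ∈ s := by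
  refine ⟨fun hx => ⟨intrinsicInterior_subset hx,
    fun y hy => exists_one_lt_homothety_mem_of_mem_intrinsicInterior hx hy⟩, ?_⟩
  rintro ⟨hx, hext⟩
  obtain ⟨w, hw⟩ := Set.Nonempty.intrinsicInterior hs ⟨x, hx⟩
  obtain ⟨t, ht, hz⟩ := hext w (intrinsicInterior_subset hw)
  exact mem_intrinsicInterior_of_homothety_mem hs hw ht hz

theorem lt_of_mem_intrinsicInterior (f : V →ₗ[ℝ] ℝ) {c : ℝ} (hf : ∀ z ∈ s, f z ≤ c)
    (hy : y ∈ s) (hfy : f y < c) (hx : x ∈ intrinsicInterior ℝ s) : f x < c := by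
  obtain ⟨t, ht, hz⟩ := exists_one_lt_homothety_mem_of_mem_intrinsicInterior hx hy
  have := hf _ hz
  simp only [homothety_apply, vsub_eq_sub, vadd_eq_add, map_add, map_smul, map_sub,
    smul_eq_mul] at this
  nlinarith

theorem intrinsicInterior_smul [FiniteDimensional ℝ V] {c : ℝ} (hc : c ≠ 0) (s : Set V) :
    intrinsicInterior ℝ (c • s) = c • intrinsicInterior ℝ s := by
  simpa [Set.image_smul] using
    (LinearEquiv.smulOfNeZero ℝ V c hc).toAffineEquiv.intrinsicInterior_image s

theorem intrinsicInterior_vadd (v : V) (s : Set V) :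
    intrinsicInterior ℝ (v +ᵥ s) = v +ᵥ intrinsicInterior ℝ s := by
  simpa only [AffineIsometryEquiv.coe_toAffineIsometry, AffineIsometryEquiv.coe_constVAdd,
    Set.image_vadd] using
    (AffineIsometryEquiv.constVAdd ℝ V v).toAffineIsometry.intrinsicInterior_image s

theorem add_mem_intrinsicInterior_one_add_smul [FiniteDimensional ℝ V] (hs : Convex ℝ s)
    (hx : x ∈ intrinsicInterior ℝ s) {c : ℝ} (hc : 0 ≤ c) {z : V} (hz : z ∈ c • s) :
    x + z ∈ intrinsicInterior ℝ ((1 + c) • s) := by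
  obtain ⟨y, hy, rfl⟩ := hz
  have hc' : (0 : ℝ) < 1 + c := by linarith
  rw [intrinsicInterior_smul hc'.ne']
  refine ⟨_, homothety_mem_intrinsicInterior hs hx hy (inv_pos.2 hc')
    (inv_le_one_of_one_le₀ (by linarith)), ?_⟩
  simp only [homothety_apply, vsub_eq_sub, vadd_eq_add]
  match_scalars
  · field_simp
  · field_simp; ring

theorem intrinsicInterior_inter_preimage_singleton [FiniteDimensional ℝ V]
    {W : Type*} [AddCommGroup W] [Module ℝ W] {K : Set V} (hK : Convex ℝ K) (f : V →ₗ[ℝ] W)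
    {w : W} (hw : ∃ x ∈ intrinsicInterior ℝ K, f x = w) :
    intrinsicInterior ℝ (K ∩ f ⁻¹' {w}) = intrinsicInterior ℝ K ∩ f ⁻¹' {w} := by
  have hfib : Convex ℝ (f ⁻¹' {w}) := (convex_singleton w).linear_preimage f
  have hhom : ∀ {x y : V} (t : ℝ), f x = w → f y = w → f (homothety y t x) = w := by
    intro x y t hx hy
    simp [homothety_apply, hx, hy]
  ext x
  rw [mem_inter_iff, mem_intrinsicInterior_iff_forall_exists_homothety_mem (hK.inter hfib)]
  constructor
  · rintro ⟨⟨hxK, hx⟩, hext⟩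
    obtain ⟨u, hu, hfu⟩ := hw
    obtain ⟨t, ht, hz⟩ := hext u ⟨intrinsicInterior_subset hu, hfu⟩
    exact ⟨mem_intrinsicInterior_of_homothety_mem hK hu ht hz.1, hx⟩
  · rintro ⟨hx, hfx⟩
    refine ⟨⟨intrinsicInterior_subset hx, hfx⟩, fun y ⟨hy, hfy⟩ => ?_⟩
    obtain ⟨t, ht, hz⟩ := exists_one_lt_homothety_mem_of_mem_intrinsicInterior hx hy
    exact ⟨t, ht, hz, hhom t hfx hfy⟩

end IntrinsicInterior

section ConvexCombination

variable {E : Type*} [AddCommGroup E] [Module ℝ E]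

theorem Convex.sum_smul_mem_smul {s : Set E} (hs : Convex ℝ s) (hne : s.Nonempty) {ι : Type*}
    (t : Finset ι) {w : ι → ℝ} {z : ι → E} (hw : ∀ i ∈ t, 0 ≤ w i) (hz : ∀ i ∈ t, z i ∈ s) :
    ∑ i ∈ t, w i • z i ∈ (∑ i ∈ t, w i) • s := by
  classical
  induction t using Finset.induction_on with
  | empty => simp [Set.zero_smul_set hne]
  | insert a t ha ih =>
    rw [Finset.sum_insert ha, Finset.sum_insert ha,
      hs.add_smul (hw a (by simp)) (Finset.sum_nonneg fun i hi => hw i (by simp [hi]))]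
    exact Set.add_mem_add (Set.smul_mem_smul_set (hz a (by simp)))
      (ih (fun i hi => hw i (by simp [hi])) (fun i hi => hz i (by simp [hi])))

theorem convexHull_iUnion_eq {ι : Type*} [Fintype ι] {C : ι → Set E}
    (hC : ∀ i, Convex ℝ (C i)) (hne : ∀ i, (C i).Nonempty) :
    convexHull ℝ (⋃ i, C i) = {x | ∃ (t : ι → ℝ) (c : ι → E), (∀ i, 0 ≤ t i) ∧
      ∑ i, t i = 1 ∧ (∀ i, c i ∈ C i) ∧ ∑ i, t i • c i = x} := by
  classical
  refine subset_antisymm (convexHull_min ?_ ?_) ?_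
  · refine iUnion_subset fun i y hy =>
      ⟨Pi.single i 1, Function.update (fun j => (hne j).some) i y, ?_, by simp, fun j => ?_, ?_⟩
    · intro j; by_cases h : j = i <;> simp [h]
    · by_cases h : j = i
      · subst h; simpa using hy
      · simpa [h] using (hne j).some_mem
    · simp [Pi.single_apply]
  · rintro _ ⟨t, c, ht, ht1, hc, rfl⟩ _ ⟨u, d, hu, hu1, hd, rfl⟩ a b ha hb hab
    choose e he hed using fun i =>
      (hC i).exists_mem_add_smul_eq (hc i) (hd i) (mul_nonneg ha (ht i)) (mul_nonneg hb (hu i))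
    refine ⟨fun i => a * t i + b * u i, e, fun i => add_nonneg (mul_nonneg ha (ht i))
      (mul_nonneg hb (hu i)), ?_, he, ?_⟩
    · simp [Finset.sum_add_distrib, ← Finset.mul_sum, ht1, hu1, hab]
    · simp only [hed, Finset.smul_sum, smul_smul, Finset.sum_add_distrib]
  · rintro _ ⟨t, c, ht, ht1, hc, rfl⟩
    exact (convex_convexHull ℝ _).sum_mem (fun i _ => ht i) ht1
      (fun i _ => subset_convexHull ℝ _ (mem_iUnion.2 ⟨i, hc i⟩))

end ConvexCombination

section Lattice

def latticePoints (n : ℕ) : AddSubgroup (Fin n → ℝ) :=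
  AddSubgroup.pi univ fun _ => (Int.castAddHom ℝ).range

theorem mem_latticePoints {n : ℕ} {x : Fin n → ℝ} : x ∈ latticePoints n ↔ IsLatticePoint x := by
  simp [latticePoints, AddSubgroup.mem_pi, IsLatticePoint, AddSubgroup.mem_zmultiples_iff, eq_comm]

theorem single_one_mem_latticePoints {n : ℕ} (i : Fin n) : Pi.single i 1 ∈ latticePoints n := by
  rw [mem_latticePoints]
  intro j
  by_cases h : j = i
  · exact ⟨1, by simp [h]⟩
  · exact ⟨0, by simp [h]⟩

theorem IsLatticePoint.one_le_of_pos {n : ℕ} {x : Fin n → ℝ} (hx : IsLatticePoint x) (i : Fin n)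
    (hi : 0 < x i) : 1 ≤ x i := by
  obtain ⟨z, hz⟩ := hx i
  rw [hz] at hi ⊢
  exact_mod_cast (Int.cast_pos.1 hi : 0 < z)

theorem IsLatticePolytope.convex {n : ℕ} {P : Set (Fin n → ℝ)} (hP : IsLatticePolytope P) :
    Convex ℝ P := by
  obtain ⟨V, -, rfl⟩ := hP
  exact convex_convexHull ℝ _

end Lattice

theorem codeg_eq_iff_of_forall_lt {n : ℕ} {P : Set (Fin n → ℝ)} {d : ℕ} (hd : 1 ≤ d)
    (h : ∀ l : ℕ, 1 ≤ l → l < d →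
      ¬ ∃ x, IsLatticePoint x ∧ x ∈ intrinsicInterior ℝ ((l : ℝ) • P)) :
    codeg P = d ↔ ∃ x, IsLatticePoint x ∧ x ∈ intrinsicInterior ℝ ((d : ℝ) • P) := by
  constructor
  · rintro rfl
    have hne : {l : ℕ | 1 ≤ l ∧ ∃ x, IsLatticePoint x ∧
        x ∈ intrinsicInterior ℝ ((l : ℝ) • P)}.Nonempty := by
      by_contra h'
      rw [Set.not_nonempty_iff_eq_empty] at h'
      rw [codeg, h', Nat.sInf_empty] at hd
      omega
    exact (Nat.sInf_mem hne).2
  · intro hx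
    refine le_antisymm (Nat.sInf_le ⟨hd, hx⟩) (le_csInf ⟨d, hd, hx⟩ ?_)
    rintro l ⟨hl, hlx⟩
    by_contra! hld
    exact h l hl hld hlx

section Cayley

variable {m k : ℕ}

def cayleyHeight (m k : ℕ) : (Fin (m + k) → ℝ) →ₗ[ℝ] Fin k → ℝ :=
  LinearMap.funLeft ℝ ℝ (Fin.natAdd m)

theorem cayleyHeight_apply (x : Fin (m + k) → ℝ) (j : Fin k) :
    cayleyHeight m k x j = x (Fin.natAdd m j) := rfl

theorem cayleyHeight_single (j : Fin k) :
    cayleyHeight m k (Pi.single (Fin.natAdd m j) 1) = Pi.single j 1 := by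
  ext j'
  simp [cayleyHeight_apply, Pi.single_apply, Fin.natAdd_inj]

theorem cayleyHeight_eq_zero {x : Fin (m + k) → ℝ}
    (hx : ∀ i : Fin (m + k), m ≤ (i : ℕ) → x i = 0) : cayleyHeight m k x = 0 := by
  ext
  exact hx _ (by simp)

def cayleyShift (m k : ℕ) : Fin (m + k) → ℝ := ∑ j, Pi.single (Fin.natAdd m j) 1

theorem cayleyShift_mem_latticePoints : cayleyShift m k ∈ latticePoints (m + k) :=
  AddSubgroup.sum_mem _ fun _ _ => single_one_mem_latticePoints _

variable (P₀ : Set (Fin (m + k) → ℝ)) (Q : Fin k → Set (Fin (m + k) → ℝ))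

def cayleyPiece : Option (Fin k) → Set (Fin (m + k) → ℝ)
  | none => P₀
  | some j => (fun v => v + Pi.single (Fin.natAdd m j) 1) '' Q j

def cayleySum : Set (Fin (m + k) → ℝ) := convexHull ℝ (⋃ o, cayleyPiece P₀ Q o)

def minkowskiSum : Set (Fin (m + k) → ℝ) :=
  {y | ∃ p ∈ P₀, ∃ f : Fin k → (Fin (m + k) → ℝ), (∀ j, f j ∈ Q j) ∧ y = p + ∑ j, f j}

structure IsCayleyFamily : Prop where
  convex_zero : Convex ℝ P₀
  nonempty_zero : P₀.Nonempty
  height_zero : ∀ p ∈ P₀, cayleyHeight m k p = 0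
  convex : ∀ j, Convex ℝ (Q j)
  nonempty : ∀ j, (Q j).Nonempty
  height : ∀ j, ∀ q ∈ Q j, cayleyHeight m k q = 0

variable {P₀ Q}

theorem convex_cayleySum : Convex ℝ (cayleySum P₀ Q) := convex_convexHull ℝ _

theorem mem_cayleySum_of_mem_cayleyPiece {o : Option (Fin k)} {c : Fin (m + k) → ℝ}
    (hc : c ∈ cayleyPiece P₀ Q o) : c ∈ cayleySum P₀ Q :=
  subset_convexHull ℝ _ (mem_iUnion.2 ⟨o, hc⟩)

namespace IsCayleyFamily

theorem convex_cayleyPiece (hPQ : IsCayleyFamily P₀ Q) (o : Option (Fin k)) :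
    Convex ℝ (cayleyPiece P₀ Q o) := by
  cases o with
  | none => exact hPQ.convex_zero
  | some j =>
    simpa only [cayleyPiece, add_comm _ (Pi.single _ _)] using
      (hPQ.convex j).translate (Pi.single (Fin.natAdd m j) 1)

theorem cayleyPiece_nonempty (hPQ : IsCayleyFamily P₀ Q) (o : Option (Fin k)) :
    (cayleyPiece P₀ Q o).Nonempty := by
  cases o with
  | none => exact hPQ.nonempty_zero
  | some j => exact (hPQ.nonempty j).image _

theorem cayleyHeight_of_mem_cayleyPiece (hPQ : IsCayleyFamily P₀ Q) {o : Option (Fin k)}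
    {c : Fin (m + k) → ℝ} (hc : c ∈ cayleyPiece P₀ Q o) :
    cayleyHeight m k c = o.elim 0 (Pi.single · 1) := by
  cases o with
  | none => exact hPQ.height_zero c hc
  | some j =>
    obtain ⟨q, hq, rfl⟩ := hc
    simp [hPQ.height j q hq, cayleyHeight_single]

theorem cayleyHeight_sum_smul (hPQ : IsCayleyFamily P₀ Q) {t : Option (Fin k) → ℝ}
    {c : Option (Fin k) → Fin (m + k) → ℝ} (hc : ∀ o, c o ∈ cayleyPiece P₀ Q o) :
    cayleyHeight m k (∑ o, t o • c o) = fun j => t (some j) := by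
  ext j
  simp [map_sum, hPQ.cayleyHeight_of_mem_cayleyPiece (hc _), Fintype.sum_option,
    Finset.sum_apply, Pi.single_apply]

theorem mem_cayleySum_iff (hPQ : IsCayleyFamily P₀ Q) {x : Fin (m + k) → ℝ} :
    x ∈ cayleySum P₀ Q ↔ ∃ (t : Option (Fin k) → ℝ) (c : Option (Fin k) → Fin (m + k) → ℝ),
      (∀ o, 0 ≤ t o) ∧ ∑ o, t o = 1 ∧ (∀ o, c o ∈ cayleyPiece P₀ Q o) ∧ ∑ o, t o • c o = x := by
  rw [cayleySum, convexHull_iUnion_eq hPQ.convex_cayleyPiece hPQ.cayleyPiece_nonempty]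
  rfl

theorem cayleyHeight_nonneg_of_mem (hPQ : IsCayleyFamily P₀ Q) {x : Fin (m + k) → ℝ}
    (hx : x ∈ cayleySum P₀ Q) (j : Fin k) : 0 ≤ cayleyHeight m k x j := by
  obtain ⟨t, c, ht, -, hc, rfl⟩ := hPQ.mem_cayleySum_iff.1 hx
  rw [hPQ.cayleyHeight_sum_smul hc]
  exact ht _

theorem sum_cayleyHeight_le_one_of_mem (hPQ : IsCayleyFamily P₀ Q) {x : Fin (m + k) → ℝ}
    (hx : x ∈ cayleySum P₀ Q) : ∑ j, cayleyHeight m k x j ≤ 1 := by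
  obtain ⟨t, c, ht, ht1, hc, rfl⟩ := hPQ.mem_cayleySum_iff.1 hx
  rw [hPQ.cayleyHeight_sum_smul hc]
  rw [Fintype.sum_option] at ht1
  linarith [ht none]

theorem cayleyHeight_pos_of_mem_intrinsicInterior (hPQ : IsCayleyFamily P₀ Q)
    {u : Fin (m + k) → ℝ} (hu : u ∈ intrinsicInterior ℝ (cayleySum P₀ Q)) (j : Fin k) :
    0 < cayleyHeight m k u j := by
  obtain ⟨q, hq⟩ := hPQ.nonempty j
  have hy : q + Pi.single (Fin.natAdd m j) 1 ∈ cayleySum P₀ Q :=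
    mem_cayleySum_of_mem_cayleyPiece (o := some j) ⟨q, hq, rfl⟩
  have := lt_of_mem_intrinsicInterior (-(LinearMap.proj j ∘ₗ cayleyHeight m k)) (c := 0)
    (fun z hz => by simpa using hPQ.cayleyHeight_nonneg_of_mem hz j) hy
    (by simp [hPQ.height j q hq, cayleyHeight_single]) hu
  simpa using this

theorem sum_cayleyHeight_lt_one_of_mem_intrinsicInterior (hPQ : IsCayleyFamily P₀ Q)
    {u : Fin (m + k) → ℝ} (hu : u ∈ intrinsicInterior ℝ (cayleySum P₀ Q)) :
    ∑ j, cayleyHeight m k u j < 1 := by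
  obtain ⟨p, hp⟩ := hPQ.nonempty_zero
  have := lt_of_mem_intrinsicInterior ((∑ j, LinearMap.proj j) ∘ₗ cayleyHeight m k) (c := 1)
    (fun z hz => by simpa using hPQ.sum_cayleyHeight_le_one_of_mem hz)
    (mem_cayleySum_of_mem_cayleyPiece (o := none) hp) (by simp [hPQ.height_zero p hp]) hu
  simpa using this

theorem one_le_cayleyHeight_and_sum_lt_of_isLatticePoint (hPQ : IsCayleyFamily P₀ Q) {l : ℕ}
    (hl : 0 < l) {x : Fin (m + k) → ℝ} (hx : IsLatticePoint x)
    (hxP : x ∈ intrinsicInterior ℝ ((l : ℝ) • cayleySum P₀ Q)) :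
    (∀ j, 1 ≤ cayleyHeight m k x j) ∧ ∑ j, cayleyHeight m k x j < l := by
  have hl' : (0 : ℝ) < l := Nat.cast_pos.2 hl
  rw [intrinsicInterior_smul hl'.ne'] at hxP
  obtain ⟨u, hu, rfl⟩ := hxP
  simp only [map_smul, Pi.smul_apply, smul_eq_mul, ← Finset.mul_sum]
  refine ⟨fun j => hx.one_le_of_pos (Fin.natAdd m j) ?_, ?_⟩
  · exact mul_pos hl' (hPQ.cayleyHeight_pos_of_mem_intrinsicInterior hu j)
  · simpa using
      mul_lt_mul_of_pos_left (hPQ.sum_cayleyHeight_lt_one_of_mem_intrinsicInterior hu) hl'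

theorem not_exists_isLatticePoint_mem_intrinsicInterior_smul (hPQ : IsCayleyFamily P₀ Q)
    {l : ℕ} (hl : 1 ≤ l) (hlk : l ≤ k) :
    ¬ ∃ x, IsLatticePoint x ∧ x ∈ intrinsicInterior ℝ ((l : ℝ) • cayleySum P₀ Q) := by
  rintro ⟨x, hx, hxP⟩
  obtain ⟨hone, hsum⟩ := hPQ.one_le_cayleyHeight_and_sum_lt_of_isLatticePoint hl hx hxP
  have hk : (k : ℝ) ≤ ∑ j, cayleyHeight m k x j := by
    simpa using Finset.card_nsmul_le_sum Finset.univ _ 1 fun j _ => hone j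
  have hlk' : (l : ℝ) ≤ k := Nat.cast_le.2 hlk
  linarith

theorem cayleyHeight_eq_one_of_isLatticePoint (hPQ : IsCayleyFamily P₀ Q)
    {x : Fin (m + k) → ℝ} (hx : IsLatticePoint x)
    (hxP : x ∈ intrinsicInterior ℝ (((k + 1 : ℕ) : ℝ) • cayleySum P₀ Q)) :
    cayleyHeight m k x = 1 := by
  obtain ⟨hone, hsum⟩ :=
    hPQ.one_le_cayleyHeight_and_sum_lt_of_isLatticePoint (by omega : 0 < k + 1) hx hxP
  ext j
  have hle : cayleyHeight m k x j - 1 ≤ ∑ i, (cayleyHeight m k x i - 1) :=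
    Finset.single_le_sum (fun i _ => sub_nonneg.2 (hone i)) (Finset.mem_univ j)
  have hlt : ∑ i, (cayleyHeight m k x i - 1) < 1 := by
    simp only [Finset.sum_sub_distrib, Finset.sum_const, Finset.card_univ, Fintype.card_fin,
      nsmul_eq_mul, mul_one]
    push_cast at hsum
    linarith
  have hone := hone j
  obtain ⟨z, hz⟩ := hx (Fin.natAdd m j)
  rw [cayleyHeight_apply, hz] at hone hle
  have h1 : (1 : ℤ) ≤ z := by exact_mod_cast hone
  have h2 : z < 2 := by exact_mod_cast (by linarith : (z : ℝ) < 2)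
  rw [Pi.one_apply, cayleyHeight_apply, hz]
  exact_mod_cast (by omega : z = 1)

theorem exists_cayleyHeight_eq_one_mem_intrinsicInterior (hPQ : IsCayleyFamily P₀ Q) :
    ∃ w ∈ intrinsicInterior ℝ (((k + 1 : ℕ) : ℝ) • cayleySum P₀ Q), cayleyHeight m k w = 1 := by
  obtain ⟨p, hp⟩ := hPQ.nonempty_zero
  have hne : (cayleySum P₀ Q).Nonempty := ⟨p, mem_cayleySum_of_mem_cayleyPiece (o := none) hp⟩
  obtain ⟨u, hu⟩ := hne.intrinsicInterior convex_cayleySum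
  set a := cayleyHeight m k u
  have ha : ∀ j, 0 ≤ a j := hPQ.cayleyHeight_nonneg_of_mem (intrinsicInterior_subset hu)
  have ha1 : ∑ j, a j ≤ 1 := hPQ.sum_cayleyHeight_le_one_of_mem (intrinsicInterior_subset hu)
  -- add to `u` a point of `k • P` of height `1 - a`
  choose c hc using hPQ.cayleyPiece_nonempty
  set t : Option (Fin k) → ℝ := fun o => o.elim (∑ j, a j) (fun j => 1 - a j)
  have ht : ∀ o ∈ Finset.univ, 0 ≤ t o := by
    rintro (_ | j) -
    · exact Finset.sum_nonneg fun j _ => ha j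
    · exact sub_nonneg.2 ((Finset.single_le_sum (fun i _ => ha i) (Finset.mem_univ j)).trans ha1)
  have hz : ∑ o, t o • c o ∈ (k : ℝ) • cayleySum P₀ Q := by
    convert convex_cayleySum.sum_smul_mem_smul hne Finset.univ ht
      fun o _ => mem_cayleySum_of_mem_cayleyPiece (hc o)
    simp [t, Fintype.sum_option, Finset.sum_sub_distrib]
  refine ⟨u + ∑ o, t o • c o, ?_, ?_⟩
  · simpa [add_comm] using
      add_mem_intrinsicInterior_one_add_smul convex_cayleySum hu (Nat.cast_nonneg k) hz
  · rw [map_add, hPQ.cayleyHeight_sum_smul hc]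
    ext j
    simp [t, a]

theorem eq_inv_of_cayleyHeight_smul_eq_one (hPQ : IsCayleyFamily P₀ Q)
    {t : Option (Fin k) → ℝ} {c : Option (Fin k) → Fin (m + k) → ℝ} (ht1 : ∑ o, t o = 1)
    (hc : ∀ o, c o ∈ cayleyPiece P₀ Q o)
    (hx : cayleyHeight m k (((k + 1 : ℕ) : ℝ) • ∑ o, t o • c o) = 1) :
    t = fun _ => ((k + 1 : ℕ) : ℝ)⁻¹ := by
  rw [map_smul, hPQ.cayleyHeight_sum_smul hc] at hx
  have htj : ∀ j, t (some j) = ((k + 1 : ℕ) : ℝ)⁻¹ := fun j =>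
    eq_inv_of_mul_eq_one_right <| by simpa using congrFun hx j
  funext o
  rcases o with _ | j
  · rw [Fintype.sum_option] at ht1
    simp only [htj, Finset.sum_const, Finset.card_univ, Fintype.card_fin, nsmul_eq_mul] at ht1
    have : (k : ℝ) * ((k + 1 : ℕ) : ℝ)⁻¹ = 1 - ((k + 1 : ℕ) : ℝ)⁻¹ := by field_simp; simp
    linarith
  · exact htj j

theorem sum_eq_cayleyShift_vadd {c : Option (Fin k) → Fin (m + k) → ℝ}
    {f : Fin k → Fin (m + k) → ℝ} (hf : ∀ j, c (some j) = f j + Pi.single (Fin.natAdd m j) 1) :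
    ∑ o, c o = cayleyShift m k +ᵥ (c none + ∑ j, f j) := by
  rw [Fintype.sum_option, Finset.sum_congr rfl fun j _ => hf j, Finset.sum_add_distrib,
    cayleyShift, vadd_eq_add]
  abel

theorem smul_cayleySum_inter_cayleyHeight_eq_one (hPQ : IsCayleyFamily P₀ Q) :
    ((k + 1 : ℕ) : ℝ) • cayleySum P₀ Q ∩ cayleyHeight m k ⁻¹' {1} =
      cayleyShift m k +ᵥ minkowskiSum P₀ Q := by
  set ρ : ℝ := ((k + 1 : ℕ) : ℝ)
  have hρ : ρ ≠ 0 := by positivity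
  have hsum : ∀ c : Option (Fin k) → Fin (m + k) → ℝ, ρ • ∑ o, ρ⁻¹ • c o = ∑ o, c o := by
    intro c
    simp [Finset.smul_sum, smul_smul, hρ]
  ext x
  constructor
  · rintro ⟨⟨y, hy, rfl⟩, hx1⟩
    obtain ⟨t, c, -, ht1, hc, rfl⟩ := hPQ.mem_cayleySum_iff.1 hy
    choose f hf hfc using fun j => hc (some j)
    refine ⟨c none + ∑ j, f j, ⟨c none, hc none, f, hf, rfl⟩, ?_⟩
    rw [hPQ.eq_inv_of_cayleyHeight_smul_eq_one ht1 hc hx1]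
    show cayleyShift m k +ᵥ (c none + ∑ j, f j) = ρ • ∑ o, ρ⁻¹ • c o
    rw [hsum, sum_eq_cayleyShift_vadd fun j => (hfc j).symm]
  · rintro ⟨_, ⟨p, hp, f, hf, rfl⟩, rfl⟩
    set c : Option (Fin k) → Fin (m + k) → ℝ :=
      fun o => o.elim p fun j => f j + Pi.single (Fin.natAdd m j) 1
    have hc : ∀ o, c o ∈ cayleyPiece P₀ Q o := by
      rintro (_ | j)
      · exact hp
      · exact ⟨f j, hf j, rfl⟩
    have hx : ρ • ∑ o, ρ⁻¹ • c o = cayleyShift m k +ᵥ (p + ∑ j, f j) := by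
      rw [hsum, sum_eq_cayleyShift_vadd fun j => rfl]
      rfl
    refine ⟨⟨_, hPQ.mem_cayleySum_iff.2 ⟨_, c, fun _ => by positivity, ?_, hc, rfl⟩, hx⟩, ?_⟩
    · simp [ρ]
      field_simp
    · show cayleyHeight m k (cayleyShift m k +ᵥ (p + ∑ j, f j)) = 1
      rw [← hx, map_smul, hPQ.cayleyHeight_sum_smul hc]
      ext
      simp [hρ]

theorem exists_isLatticePoint_mem_intrinsicInterior_iff (hPQ : IsCayleyFamily P₀ Q) :
    (∃ x, IsLatticePoint x ∧ x ∈ intrinsicInterior ℝ (((k + 1 : ℕ) : ℝ) • cayleySum P₀ Q)) ↔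
      ∃ v, IsLatticePoint v ∧ v ∈ intrinsicInterior ℝ (minkowskiSum P₀ Q) := by
  have hslice := intrinsicInterior_inter_preimage_singleton
    (convex_cayleySum.smul _) (cayleyHeight m k)
    hPQ.exists_cayleyHeight_eq_one_mem_intrinsicInterior
  rw [hPQ.smul_cayleySum_inter_cayleyHeight_eq_one, intrinsicInterior_vadd] at hslice
  have hshift := cayleyShift_mem_latticePoints (m := m) (k := k)
  constructor
  · rintro ⟨x, hx, hxP⟩
    obtain ⟨v, hv, rfl⟩ : x ∈ cayleyShift m k +ᵥ intrinsicInterior ℝ (minkowskiSum P₀ Q) :=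
      hslice ▸ ⟨hxP, hPQ.cayleyHeight_eq_one_of_isLatticePoint hx hxP⟩
    exact ⟨v, mem_latticePoints.1 ((add_mem_cancel_left hshift).1 (mem_latticePoints.2 hx)), hv⟩
  · rintro ⟨v, hv, hvM⟩
    have hx : cayleyShift m k +ᵥ v ∈ _ := hslice ▸ vadd_mem_vadd_set hvM
    exact ⟨_, mem_latticePoints.1 (add_mem hshift (mem_latticePoints.2 hv)), hx.1⟩

end IsCayleyFamily

end Cayley

/-- for nonempty lattice polytopes `P₀, P₁, …, P_k ⊂ ℝ^{n−k}` with Cayley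
sum `P = P₀ ∗ P₁ ∗ ⋯ ∗ P_k ⊂ ℝⁿ` (here `n = m + k`, with `ℝ^{n−k}` the first `m`
coordinates): (1) `codeg(P) ≥ k + 1`, i.e. for every `1 ≤ λ ≤ k` the relative interior of
`λP` contains no lattice point; and (2) `codeg(P) = k + 1` if and only if the relative
interior of the Minkowski sum `P₀ + P₁ + ⋯ + P_k` contains a lattice point. -/
theorem codeg_cayley {m k : ℕ}
    (P₀ : Set (Fin (m + k) → ℝ)) (Q : Fin k → Set (Fin (m + k) → ℝ))
    (hsub₀ : ∀ x ∈ P₀, ∀ i : Fin (m + k), m ≤ (i : ℕ) → x i = 0)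
    (hsub : ∀ j : Fin k, ∀ x ∈ Q j, ∀ i : Fin (m + k), m ≤ (i : ℕ) → x i = 0)
    (h₀ : IsLatticePolytope P₀) (h₀ne : P₀.Nonempty)
    (hQ : ∀ j, IsLatticePolytope (Q j) ∧ (Q j).Nonempty)
    (P : Set (Fin (m + k) → ℝ))
    (hPdef : P = convexHull ℝ
      (P₀ ∪ ⋃ j : Fin k, (fun v => v + Pi.single (Fin.natAdd m j) (1 : ℝ)) '' Q j)) :
    (∀ l : ℕ, 1 ≤ l → l ≤ k →
        ¬ ∃ x, IsLatticePoint x ∧ x ∈ intrinsicInterior ℝ ((l : ℝ) • P)) ∧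
    (codeg P = k + 1 ↔ ∃ x, IsLatticePoint x ∧ x ∈ intrinsicInterior ℝ
        {y | ∃ p ∈ P₀, ∃ f : Fin k → (Fin (m + k) → ℝ),
          (∀ j, f j ∈ Q j) ∧ y = p + ∑ j, f j}) := by
  have hPQ : IsCayleyFamily P₀ Q :=
    { convex_zero := h₀.convex
      nonempty_zero := h₀ne
      height_zero := fun p hp => cayleyHeight_eq_zero (hsub₀ p hp)
      convex := fun j => (hQ j).1.convex
      nonempty := fun j => (hQ j).2
      height := fun j q hq => cayleyHeight_eq_zero (hsub j q hq) }
  have hP : P = cayleySum P₀ Q := by rw [hPdef, cayleySum, iUnion_option]; rfl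
  subst hP
  have hlow : ∀ l : ℕ, 1 ≤ l → l ≤ k →
      ¬ ∃ x, IsLatticePoint x ∧ x ∈ intrinsicInterior ℝ ((l : ℝ) • cayleySum P₀ Q) :=
    fun l hl hlk => hPQ.not_exists_isLatticePoint_mem_intrinsicInterior_smul hl hlk
  refine ⟨hlow, ?_⟩
  rw [codeg_eq_iff_of_forall_lt (by omega) fun l hl hlk => hlow l hl (by omega)]
  exact hPQ.exists_isLatticePoint_mem_intrinsicInterior_iff

end
end

section
/- Let 𝐏 ⊂ ℤ^r be a finite set whose convex hull has dimension r. Then there exist finitely many pairs (ξ_1, m_1), …, (ξ_s, m_s), where each ξ_i: ℤ^r → ℤ is a nonzero linear functional and m_i ∈ ℤ, such that every X ∈ ℤ^r not lying in the union of the slabs {x : m_i ≤ ξ_i(x) ≤ m_i + 1} satisfies: the lattice width of 𝐏 ∪ {X} is at least 2. In particular, for all X ∈ ℤ^r outside a finite union of such slabs, the set 𝐏 ∪ {X} is not a non-trivial Cayley sum (has lattice width greater than 1). -/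
open scoped Pointwise

/-!
The nonzero functionals `φ` in which `𝐏` has width at most `1` are finitely many: since the
differences of points of `𝐏` span `ℝ^r`, such a `φ` is determined by its values on them, which
lie in `{-1, 0, 1}`. Each of them takes both values `m` and `m + 1` on `𝐏` (a nonzero functional
is not constant on `𝐏`), so a lattice point `X` off the slab `m ≤ φ ≤ m + 1` gives `φ`-width
at least `2` to `𝐏 ∪ {X}`. Every other nonzero `φ` already has width at least `2` on `𝐏`.
-/

namespace LatticeWidth

variable {ι : Type*} [Fintype ι] [DecidableEq ι]

noncomputable def realExtension (φ : (ι → ℤ) →ₗ[ℤ] ℤ) : (ι → ℝ) →ₗ[ℝ] ℝ :=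
  Fintype.linearCombination ℝ fun i => (φ fun j => if i = j then 1 else 0 : ℝ)

theorem realExtension_intCast (φ : (ι → ℤ) →ₗ[ℤ] ℤ) (v : ι → ℤ) :
    realExtension φ (fun i => (v i : ℝ)) = φ v := by
  rw [realExtension, Fintype.linearCombination_apply, φ.pi_apply_eq_sum_univ v]
  simp only [smul_eq_mul, Int.cast_sum, Int.cast_mul]

theorem eq_zero_of_forall_apply_eq {A : Set (ι → ℤ)}
    (hA : vectorSpan ℝ ((fun v i => (v i : ℝ)) '' A) = ⊤) {φ : (ι → ℤ) →ₗ[ℤ] ℤ}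
    (hφ : ∀ a ∈ A, ∀ b ∈ A, φ a = φ b) : φ = 0 := by
  have hker : vectorSpan ℝ ((fun v i => (v i : ℝ)) '' A) ≤ LinearMap.ker (realExtension φ) := by
    rw [vectorSpan_def, Submodule.span_le]
    rintro - ⟨-, ⟨a, ha, rfl⟩, -, ⟨b, hb, rfl⟩, rfl⟩
    simp [realExtension_intCast, hφ a ha b hb]
  rw [hA, top_le_iff, LinearMap.ker_eq_top] at hker
  refine LinearMap.ext fun v => ?_
  simpa [hker] using (realExtension_intCast φ v).symm

theorem finite_setOf_forall_le_add_one {A : Finset (ι → ℤ)}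
    (hA : vectorSpan ℝ ((fun v i => (v i : ℝ)) '' (A : Set (ι → ℤ))) = ⊤) :
    {φ : (ι → ℤ) →ₗ[ℤ] ℤ | ∀ a ∈ A, ∀ b ∈ A, φ b ≤ φ a + 1}.Finite := by
  let differences (φ : (ι → ℤ) →ₗ[ℤ] ℤ) (p : A × A) : ℤ := φ p.2 - φ p.1
  refine Set.Finite.of_injOn (f := differences) (t := Set.Icc (-1) 1) ?_ ?_ (Set.finite_Icc _ _)
  · intro φ hφ
    constructor <;> intro p <;> simp only [differences, Pi.neg_apply, Pi.one_apply]
    · linarith [hφ p.2 p.2.2 p.1 p.1.2]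
    · linarith [hφ p.1 p.1.2 p.2 p.2.2]
  · intro φ _ ψ _ h
    rw [← sub_eq_zero]
    refine eq_zero_of_forall_apply_eq hA fun a ha b hb => ?_
    have := congrFun h (⟨a, ha⟩, ⟨b, hb⟩)
    simp only [differences, LinearMap.sub_apply] at this ⊢
    linarith

theorem exists_apply_eq_add_one {A : Finset (ι → ℤ)}
    (hA : vectorSpan ℝ ((fun v i => (v i : ℝ)) '' (A : Set (ι → ℤ))) = ⊤)
    {φ : (ι → ℤ) →ₗ[ℤ] ℤ} (hφ : φ ≠ 0) (hwidth : ∀ a ∈ A, ∀ b ∈ A, φ b ≤ φ a + 1) :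
    ∃ a ∈ A, ∃ b ∈ A, φ b = φ a + 1 := by
  by_contra! h
  exact hφ <| eq_zero_of_forall_apply_eq hA fun a ha b hb => by
    have := h a ha b hb
    have := h b hb a ha
    have := hwidth a ha b hb
    have := hwidth b hb a ha
    omega

end LatticeWidth

theorem vectorSpan_eq_top_of_polyDim_eq {r : ℕ} {S : Set (Fin r → ℝ)} (h : polyDim S = r) :
    vectorSpan ℝ S = ⊤ :=
  Submodule.eq_top_of_finrank_eq <| by
    rw [← direction_affineSpan, Module.finrank_fin_fun]
    exact h

open LatticeWidth in
/-- let `𝐏 ⊂ ℤ^r` be a finite set whose convex hull has dimension `r`.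
Then there are finitely many slabs `{x | c_i ≤ ξ_i(x) ≤ c_i + 1}` (each `ξ_i` a nonzero
linear functional) such that every lattice point `X` outside their union satisfies: the
lattice width of `𝐏 ∪ {X}` is at least `2`, i.e. for every nonzero linear functional `φ`
there are `a, b ∈ 𝐏 ∪ {X}` with `φ(b) − φ(a) ≥ 2`. -/
theorem width_ge_two_outside_slabs {r : ℕ} (A : Finset (Fin r → ℤ))
    (hdim : polyDim ((fun (v : Fin r → ℤ) => fun i => (v i : ℝ)) '' (A : Set (Fin r → ℤ))) = r) :
    ∃ (s : ℕ) (ξ : Fin s → ((Fin r → ℤ) →ₗ[ℤ] ℤ)) (c : Fin s → ℤ),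
      (∀ i, ξ i ≠ 0) ∧
      ∀ X : Fin r → ℤ, (∀ i, ¬ (c i ≤ ξ i X ∧ ξ i X ≤ c i + 1)) →
        ∀ φ : (Fin r → ℤ) →ₗ[ℤ] ℤ, φ ≠ 0 →
          ∃ a ∈ insert X A, ∃ b ∈ insert X A, φ a + 2 ≤ φ b := by
  have hA := vectorSpan_eq_top_of_polyDim_eq hdim
  set S := {φ : (Fin r → ℤ) →ₗ[ℤ] ℤ | φ ≠ 0 ∧ ∀ a ∈ A, ∀ b ∈ A, φ b ≤ φ a + 1}
  have : Fintype S := ((finite_setOf_forall_le_add_one hA).subset fun _ hφ => hφ.2).fintype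
  choose lo hlo hi hhi hlohi using fun φ : S => exists_apply_eq_add_one hA φ.2.1 φ.2.2
  let e := Fintype.equivFin S
  refine ⟨_, fun i => e.symm i, fun i => (e.symm i).1 (lo (e.symm i)), fun i => (e.symm i).2.1, ?_⟩
  intro X hX φ hφ
  by_cases hφS : φ ∈ S
  · have hslab := hX (e ⟨φ, hφS⟩)
    simp only [Equiv.symm_apply_apply] at hslab
    have hstep : φ (hi ⟨φ, hφS⟩) = φ (lo ⟨φ, hφS⟩) + 1 := hlohi ⟨φ, hφS⟩
    rcases not_and_or.mp hslab with hX | hX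
    · exact ⟨X, Finset.mem_insert_self _ _, _, Finset.mem_insert_of_mem (hhi ⟨φ, hφS⟩), by omega⟩
    · exact ⟨_, Finset.mem_insert_of_mem (hlo ⟨φ, hφS⟩), X, Finset.mem_insert_self _ _, by omega⟩
  · obtain ⟨a, ha, b, hb, hab⟩ : ∃ a ∈ A, ∃ b ∈ A, φ a + 1 < φ b := by
      simpa [S, hφ] using hφS
    exact ⟨a, Finset.mem_insert_of_mem ha, b, Finset.mem_insert_of_mem hb, by omega⟩
end
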